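/- arXiv:2506.10478 — 5 statements merged into one kernel-verified Lean document; each statement's English description precedes it below -/
import Mathlib

section
/- Let H be a K_5-free simple graph and let A_j, A_k, A_ℓ be pairwise disjoint cliques of H, each of size 4. If each of the three induced subgraphs H[A_j ∪ A_k], H[A_j ∪ A_ℓ] and H[A_k ∪ A_ℓ] is isomorphic to the Turán graph T(8,4), then the induced subgraph H[A_j ∪ A_k ∪ A_ℓ] is isomorphic to the Turán graph T(12,4). -/
open Finset SimpleGraph


lemma turan_deg8 : ∀ v : Fin 8, (SimpleGraph.turanGraph 8 4).degree v = 6 := by decide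

lemma matching_lemma {V : Type*} [DecidableEq V] (H : SimpleGraph V) (X Y : Finset V)
    (hXY : Disjoint X Y) (hX4 : X.card = 4) (hY4 : Y.card = 4)
    (hXc : H.IsClique (X : Set V))
    (iso : Nonempty (H.induce ((X ∪ Y : Finset V) : Set V) ≃g SimpleGraph.turanGraph 8 4)) :
    ∀ x ∈ X, ∃! y, y ∈ Y ∧ ¬ H.Adj x y := by
  classical
  obtain ⟨f⟩ := iso
  intro x hx
  have hxu : x ∈ X ∪ Y := mem_union_left _ hx
  set s : Set V := ((X ∪ Y : Finset V) : Set V) with hs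
  have hvs : x ∈ s := by simpa [hs] using hxu
  set v : s := ⟨x, hvs⟩ with hv
  have h1 : Fintype.card ((H.induce s).neighborSet v) =
      Fintype.card ((SimpleGraph.turanGraph 8 4).neighborSet (f v)) :=
    Fintype.card_congr (f.mapNeighborSet v)
  have h2 : Fintype.card ((SimpleGraph.turanGraph 8 4).neighborSet (f v)) = 6 := by
    rw [SimpleGraph.card_neighborSet_eq_degree]; exact turan_deg8 _
  have h3 : Fintype.card ((H.induce s).neighborSet v) =
      ((X ∪ Y).filter (fun w => H.Adj x w)).card := by
    rw [← Fintype.card_coe]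
    apply Fintype.card_congr
    refine ⟨fun p => ⟨p.1.1, ?_⟩, fun q => ⟨⟨q.1, ?_⟩, ?_⟩, ?_, ?_⟩
    · have := p.2
      simp only [SimpleGraph.mem_neighborSet, SimpleGraph.comap_adj, Function.Embedding.coe_subtype] at this
      have h' : (p.1 : V) ∈ X ∪ Y := by simpa [hs] using p.1.2
      simp [mem_filter, h', this]
      exact this
    · have := q.2; simp only [mem_filter] at this
      simpa [hs] using this.1
    · have := q.2; simp only [mem_filter] at this
      simp [SimpleGraph.mem_neighborSet, SimpleGraph.comap_adj, Function.Embedding.coe_subtype, this.2]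
      exact this.2
    · intro p; rfl
    · intro q; rfl
  have hdeg : ((X ∪ Y).filter (fun w => H.Adj x w)).card = 6 := by
    rw [← h3, h1, h2]
  have hXf : X.filter (fun w => H.Adj x w) = X.erase x := by
    ext w
    simp only [mem_filter, mem_erase]
    constructor
    · rintro ⟨hw, ha⟩; exact ⟨ha.ne', hw⟩
    · rintro ⟨hne, hw⟩; exact ⟨hw, hXc hx hw (Ne.symm hne)⟩
  have hsplit : (X ∪ Y).filter (fun w => H.Adj x w)
      = X.filter (fun w => H.Adj x w) ∪ Y.filter (fun w => H.Adj x w) :=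
    filter_union _ _ _
  have hdisj : Disjoint (X.filter (fun w => H.Adj x w)) (Y.filter (fun w => H.Adj x w)) :=
    hXY.mono (filter_subset _ _) (filter_subset _ _)
  have hY3 : (Y.filter (fun w => H.Adj x w)).card = 3 := by
    have := hdeg
    rw [hsplit, card_union_of_disjoint hdisj, hXf, card_erase_of_mem hx, hX4] at this
    omega
  have hN1 : (Y.filter (fun w => ¬ H.Adj x w)).card = 1 := by
    have := card_filter_add_card_filter_not (s := Y) (p := fun w => H.Adj x w)
    omega
  obtain ⟨b, hb⟩ := card_eq_one.mp hN1
  refine ⟨b, ?_, ?_⟩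
  · have : b ∈ Y.filter (fun w => ¬ H.Adj x w) := hb ▸ mem_singleton_self b
    simpa [mem_filter] using this
  · intro z hz
    have : z ∈ Y.filter (fun w => ¬ H.Adj x w) := mem_filter.mpr ⟨hz.1, hz.2⟩
    rw [hb, mem_singleton] at this; exact this


lemma build_iso {V : Type*} (H : SimpleGraph V) (S : Finset V) (hS : S.card = 12)
    (g : V → ℕ) (hlt : ∀ x ∈ S, g x < 12)
    (hinj : ∀ x ∈ S, ∀ y ∈ S, g x = g y → x = y)
    (hadj : ∀ x ∈ S, ∀ y ∈ S, (H.Adj x y ↔ g x % 4 ≠ g y % 4)) :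
    Nonempty (H.induce (S : Set V) ≃g SimpleGraph.turanGraph 12 4) := by
  classical
  have hmem : ∀ v : ↥(S : Set V), (v : V) ∈ S := fun v => by exact_mod_cast v.2
  let φ : ↥(S : Set V) → Fin 12 := fun v => ⟨g v, hlt v (hmem v)⟩
  have hinj' : Function.Injective φ := by
    intro u v h
    have hg : g u = g v := congrArg Fin.val h
    exact Subtype.ext (hinj u (hmem u) v (hmem v) hg)
  have hcard : Fintype.card ↥(S : Set V) = Fintype.card (Fin 12) := by
    rw [Fintype.card_fin, ← hS, ← Fintype.card_coe]
    exact Fintype.card_congr (Equiv.subtypeEquivRight (fun x => by simp))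
  have hbij : Function.Bijective φ :=
    (Fintype.bijective_iff_injective_and_card φ).mpr ⟨hinj', hcard⟩
  refine ⟨⟨Equiv.ofBijective φ hbij, ?_⟩⟩
  intro u v
  have h1 : ((Equiv.ofBijective φ hbij) u : ℕ) = g u := rfl
  have h2 : ((Equiv.ofBijective φ hbij) v : ℕ) = g v := rfl
  show ((Equiv.ofBijective φ hbij u : ℕ)) % 4 ≠ ((Equiv.ofBijective φ hbij v : ℕ)) % 4 ↔ _
  rw [h1, h2]
  simp only [SimpleGraph.comap_adj, Function.Embedding.coe_subtype]
  exact (hadj u (hmem u) v (hmem v)).symm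


section Helpers
variable {V : Type*} [DecidableEq V]

-- totalized matching: from the ∃! statement produce a total partner function
lemma totalize (H : SimpleGraph V) (X Y : Finset V)
    (m : ∀ x ∈ X, ∃! y, y ∈ Y ∧ ¬ H.Adj x y) :
    ∃ σ : V → V, ∀ x ∈ X, σ x ∈ Y ∧ ¬ H.Adj x (σ x) ∧
      ∀ z ∈ Y, ¬ H.Adj x z → z = σ x := by
  classical
  have : ∀ x, ∃ y, x ∈ X → (y ∈ Y ∧ ¬ H.Adj x y ∧ ∀ z ∈ Y, ¬ H.Adj x z → z = y) := by
    intro x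
    by_cases h : x ∈ X
    · obtain ⟨y, ⟨hy1, hy2⟩, hy3⟩ := m x h
      exact ⟨y, fun _ => ⟨hy1, hy2, fun z hz hnz => hy3 z ⟨hz, hnz⟩⟩⟩
    · exact ⟨x, fun hx => absurd hx h⟩
  choose σ hσ using this
  exact ⟨σ, fun x hx => hσ x hx⟩

end Helpers


section Helpers
variable {V : Type*} [DecidableEq V]

lemma comp_lemma (H : SimpleGraph V) (hH : H.CliqueFree 5) (Aj Ak Al : Finset V)
    (hjk : Disjoint Aj Ak) (hjl : Disjoint Aj Al) (hkl : Disjoint Ak Al)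
    (hk4 : Ak.card = 4) (hk : H.IsClique (Ak : Set V))
    (σjk σkl σjl σlk : V → V)
    (Pjk : ∀ x ∈ Aj, σjk x ∈ Ak ∧ ¬ H.Adj x (σjk x) ∧ ∀ z ∈ Ak, ¬ H.Adj x z → z = σjk x)
    (Pkl : ∀ x ∈ Ak, σkl x ∈ Al ∧ ¬ H.Adj x (σkl x) ∧ ∀ z ∈ Al, ¬ H.Adj x z → z = σkl x)
    (Pjl : ∀ x ∈ Aj, σjl x ∈ Al ∧ ¬ H.Adj x (σjl x) ∧ ∀ z ∈ Al, ¬ H.Adj x z → z = σjl x)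
    (Plk : ∀ x ∈ Al, σlk x ∈ Ak ∧ ¬ H.Adj x (σlk x) ∧ ∀ z ∈ Ak, ¬ H.Adj x z → z = σlk x) :
    ∀ a ∈ Aj, σjl a = σkl (σjk a) := by
  intro a ha
  set b := σjk a with hbdef
  have hb : b ∈ Ak := (Pjk a ha).1
  set c := σkl b with hcdef
  have hc : c ∈ Al := (Pkl b hb).1
  have hbc : ¬ H.Adj b c := (Pkl b hb).2.1
  suffices hac : ¬ H.Adj a c by
    exact ((Pjl a ha).2.2 c hc hac).symm
  intro hac
  have hadjaw : ∀ w ∈ Ak, w ≠ b → H.Adj a w := by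
    intro w hw hwb
    by_contra h
    exact hwb ((Pjk a ha).2.2 w hw h)
  have hcb : ¬ H.Adj c b := fun h => hbc h.symm
  have hbeq : b = σlk c := (Plk c hc).2.2 b hb hcb
  have hadjcw : ∀ w ∈ Ak, w ≠ b → H.Adj c w := by
    intro w hw hwb
    by_contra h
    exact hwb (((Plk c hc).2.2 w hw h).trans hbeq.symm)
  have hanotk : a ∉ Ak := fun h => disjoint_left.mp hjk ha h
  have hcnotk : c ∉ Ak := fun h => disjoint_left.mp hkl h hc
  have hac_ne : a ≠ c := fun h => disjoint_left.mp hjl ha (h ▸ hc)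
  refine hH (insert a (insert c (Ak.erase b))) ⟨?_, ?_⟩
  · intro x hx y hy hne
    simp only [coe_insert, Set.mem_insert_iff, mem_coe, mem_erase] at hx hy
    rcases hx with rfl | rfl | ⟨hxb, hxk⟩ <;> rcases hy with rfl | rfl | ⟨hyb, hyk⟩
    · exact absurd rfl hne
    · exact hac
    · exact hadjaw _ hyk hyb
    · exact hac.symm
    · exact absurd rfl hne
    · exact hadjcw _ hyk hyb
    · exact (hadjaw _ hxk hxb).symm
    · exact (hadjcw _ hxk hxb).symm
    · exact hk hxk hyk hne
  · have h1 : c ∉ Ak.erase b := fun h => hcnotk (mem_of_mem_erase h)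
    have h2 : a ∉ insert c (Ak.erase b) := by
      simp only [mem_insert, mem_erase]
      push_neg
      exact ⟨hac_ne, fun _ => hanotk⟩
    rw [card_insert_of_notMem h2, card_insert_of_notMem h1, card_erase_of_mem hb, hk4]

end Helpers

theorem stmt15 {V : Type*} [DecidableEq V] (H : SimpleGraph V) (hH : H.CliqueFree 5)
    (Aj Ak Al : Finset V)
    (hjk : Disjoint Aj Ak) (hjl : Disjoint Aj Al) (hkl : Disjoint Ak Al)
    (hj4 : Aj.card = 4) (hk4 : Ak.card = 4) (hl4 : Al.card = 4)
    (hj : H.IsClique (Aj : Set V)) (hk : H.IsClique (Ak : Set V)) (hl : H.IsClique (Al : Set V))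
    (ijk : Nonempty (H.induce ((Aj ∪ Ak : Finset V) : Set V) ≃g SimpleGraph.turanGraph 8 4))
    (ijl : Nonempty (H.induce ((Aj ∪ Al : Finset V) : Set V) ≃g SimpleGraph.turanGraph 8 4))
    (ikl : Nonempty (H.induce ((Ak ∪ Al : Finset V) : Set V) ≃g SimpleGraph.turanGraph 8 4)) :
    Nonempty (H.induce ((Aj ∪ Ak ∪ Al : Finset V) : Set V) ≃g SimpleGraph.turanGraph 12 4) := by
  classical
  obtain ⟨σjk, Pjk⟩ := totalize H Aj Ak (matching_lemma H Aj Ak hjk hj4 hk4 hj ijk)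
  obtain ⟨σkj, Pkj⟩ := totalize H Ak Aj (matching_lemma H Ak Aj hjk.symm hk4 hj4 hk (by rw [union_comm]; exact ijk))
  obtain ⟨σjl, Pjl⟩ := totalize H Aj Al (matching_lemma H Aj Al hjl hj4 hl4 hj ijl)
  obtain ⟨σlj, Plj⟩ := totalize H Al Aj (matching_lemma H Al Aj hjl.symm hl4 hj4 hl (by rw [union_comm]; exact ijl))
  obtain ⟨σkl, Pkl⟩ := totalize H Ak Al (matching_lemma H Ak Al hkl hk4 hl4 hk ikl)
  obtain ⟨σlk, Plk⟩ := totalize H Al Ak (matching_lemma H Al Ak hkl.symm hl4 hk4 hl (by rw [union_comm]; exact ikl))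
  -- inverse lemmas
  have invjk : ∀ x ∈ Aj, σkj (σjk x) = x := fun x hx =>
    ((Pkj (σjk x) (Pjk x hx).1).2.2 x hx (fun h => (Pjk x hx).2.1 h.symm)).symm
  have invkj : ∀ x ∈ Ak, σjk (σkj x) = x := fun x hx =>
    ((Pjk (σkj x) (Pkj x hx).1).2.2 x hx (fun h => (Pkj x hx).2.1 h.symm)).symm
  have invjl : ∀ x ∈ Aj, σlj (σjl x) = x := fun x hx =>
    ((Plj (σjl x) (Pjl x hx).1).2.2 x hx (fun h => (Pjl x hx).2.1 h.symm)).symm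
  have invlj : ∀ x ∈ Al, σjl (σlj x) = x := fun x hx =>
    ((Pjl (σlj x) (Plj x hx).1).2.2 x hx (fun h => (Plj x hx).2.1 h.symm)).symm
  have invkl : ∀ x ∈ Ak, σlk (σkl x) = x := fun x hx =>
    ((Plk (σkl x) (Pkl x hx).1).2.2 x hx (fun h => (Pkl x hx).2.1 h.symm)).symm
  have invlk : ∀ x ∈ Al, σkl (σlk x) = x := fun x hx =>
    ((Pkl (σlk x) (Plk x hx).1).2.2 x hx (fun h => (Plk x hx).2.1 h.symm)).symm
  -- adjacency iff across pairs
  have adjjk : ∀ x ∈ Aj, ∀ y ∈ Ak, (H.Adj x y ↔ y ≠ σjk x) := by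
    intro x hx y hy
    constructor
    · intro ha he; exact (Pjk x hx).2.1 (he ▸ ha)
    · intro hne; by_contra h; exact hne ((Pjk x hx).2.2 y hy h)
  have adjjl : ∀ x ∈ Aj, ∀ y ∈ Al, (H.Adj x y ↔ y ≠ σjl x) := by
    intro x hx y hy
    constructor
    · intro ha he; exact (Pjl x hx).2.1 (he ▸ ha)
    · intro hne; by_contra h; exact hne ((Pjl x hx).2.2 y hy h)
  have adjkl : ∀ x ∈ Ak, ∀ y ∈ Al, (H.Adj x y ↔ y ≠ σkl x) := by
    intro x hx y hy
    constructor
    · intro ha he; exact (Pkl x hx).2.1 (he ▸ ha)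
    · intro hne; by_contra h; exact hne ((Pkl x hx).2.2 y hy h)
  -- composition
  have compk : ∀ a ∈ Aj, σjl a = σkl (σjk a) :=
    comp_lemma H hH Aj Ak Al hjk hjl hkl hk4 hk σjk σkl σjl σlk Pjk Pkl Pjl Plk
  -- labeling function
  obtain ⟨eN, heN4, heNinj⟩ :
      ∃ eN : V → ℕ, (∀ x ∈ Aj, eN x < 4) ∧ (∀ x ∈ Aj, ∀ y ∈ Aj, eN x = eN y → x = y) := by
    have e := Fintype.equivFinOfCardEq (α := {x // x ∈ Aj}) (by rw [Fintype.card_coe, hj4])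
    refine ⟨fun x => if h : x ∈ Aj then (e ⟨x, h⟩ : ℕ) else 0, ?_, ?_⟩
    · intro x hx; simp only [dif_pos hx]; exact (e ⟨x, hx⟩).isLt
    · intro x hx y hy h
      simp only [dif_pos hx, dif_pos hy] at h
      have h2 := e.injective (Fin.val_injective h)
      exact congrArg Subtype.val h2
  -- nonmembership helpers
  have hkj' : ∀ x ∈ Ak, x ∉ Aj := fun x hx h => disjoint_left.mp hjk h hx
  have hlj' : ∀ x ∈ Al, x ∉ Aj := fun x hx h => disjoint_left.mp hjl h hx
  have hlk' : ∀ x ∈ Al, x ∉ Ak := fun x hx h => disjoint_left.mp hkl h hx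
  -- eN-level adjacency characterizations
  have crossJK : ∀ x ∈ Aj, ∀ y ∈ Ak, (H.Adj x y ↔ eN x ≠ eN (σkj y)) := by
    intro x hx y hy
    rw [adjjk x hx y hy]
    have key : x = σkj y ↔ y = σjk x := by
      constructor
      · intro h; rw [h]; exact (invkj y hy).symm
      · intro h; rw [h]; exact (invjk x hx).symm
    constructor
    · intro hne heq
      exact hne (key.mp (heNinj x hx (σkj y) (Pkj y hy).1 heq))
    · intro hne h
      exact hne (congrArg eN (key.mpr h))
  have crossJL : ∀ x ∈ Aj, ∀ y ∈ Al, (H.Adj x y ↔ eN x ≠ eN (σlj y)) := by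
    intro x hx y hy
    rw [adjjl x hx y hy]
    have key : x = σlj y ↔ y = σjl x := by
      constructor
      · intro h; rw [h]; exact (invlj y hy).symm
      · intro h; rw [h]; exact (invjl x hx).symm
    constructor
    · intro hne heq
      exact hne (key.mp (heNinj x hx (σlj y) (Plj y hy).1 heq))
    · intro hne h
      exact hne (congrArg eN (key.mpr h))
  have crossKL : ∀ x ∈ Ak, ∀ y ∈ Al, (H.Adj x y ↔ eN (σkj x) ≠ eN (σlj y)) := by
    intro x hx y hy
    have ha : σkj x ∈ Aj := (Pkj x hx).1
    have hcomp : σjl (σkj x) = σkl x := by rw [compk _ ha, invkj x hx]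
    rw [adjkl x hx y hy]
    have key : σkj x = σlj y ↔ y = σkl x := by
      constructor
      · intro h
        have h2 : σjl (σkj x) = y := by rw [h]; exact invlj y hy
        rw [hcomp] at h2; exact h2.symm
      · intro h
        have h2 : σlj y = σkj x := by rw [h, ← hcomp]; exact invjl _ ha
        exact h2.symm
    constructor
    · intro hne heq
      exact hne (key.mp (heNinj (σkj x) ha (σlj y) (Plj y hy).1 heq))
    · intro hne h
      exact hne (congrArg eN (key.mpr h))
  have sameJ : ∀ x ∈ Aj, ∀ y ∈ Aj, (H.Adj x y ↔ eN x ≠ eN y) := by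
    intro x hx y hy
    constructor
    · intro hadj heq; exact hadj.ne (heNinj x hx y hy heq)
    · intro hne; exact hj hx hy (fun h => hne (congrArg eN h))
  have sameK : ∀ x ∈ Ak, ∀ y ∈ Ak, (H.Adj x y ↔ eN (σkj x) ≠ eN (σkj y)) := by
    intro x hx y hy
    constructor
    · intro hadj heq
      have h2 : σkj x = σkj y := heNinj _ (Pkj x hx).1 _ (Pkj y hy).1 heq
      have h3 : x = y := by rw [← invkj x hx, ← invkj y hy, h2]
      exact hadj.ne h3
    · intro hne; exact hk hx hy (fun h => hne (congrArg (fun z => eN (σkj z)) h))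
  have sameL : ∀ x ∈ Al, ∀ y ∈ Al, (H.Adj x y ↔ eN (σlj x) ≠ eN (σlj y)) := by
    intro x hx y hy
    constructor
    · intro hadj heq
      have h2 : σlj x = σlj y := heNinj _ (Plj x hx).1 _ (Plj y hy).1 heq
      have h3 : x = y := by rw [← invlj x hx, ← invlj y hy, h2]
      exact hadj.ne h3
    · intro hne; exact hl hx hy (fun h => hne (congrArg (fun z => eN (σlj z)) h))
  -- apply the builder
  have memsplit : ∀ x ∈ Aj ∪ Ak ∪ Al, x ∈ Aj ∨ x ∈ Ak ∨ x ∈ Al := by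
    intro x hx
    simp only [mem_union] at hx
    tauto
  refine build_iso H (Aj ∪ Ak ∪ Al) ?_
    (fun x => if x ∈ Aj then eN x else if x ∈ Ak then 4 + eN (σkj x) else 8 + eN (σlj x))
    ?_ ?_ ?_
  · have hd2 : Disjoint (Aj ∪ Ak) Al := disjoint_union_left.mpr ⟨hjl, hkl⟩
    rw [card_union_of_disjoint hd2, card_union_of_disjoint hjk, hj4, hk4, hl4]
  · intro x hx
    beta_reduce
    rcases memsplit x hx with h | h | h
    · simp only [if_pos h]; have := heN4 x h; omega
    · simp only [if_neg (hkj' x h), if_pos h]; have := heN4 _ (Pkj x h).1; omega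
    · simp only [if_neg (hlj' x h), if_neg (hlk' x h)]; have := heN4 _ (Plj x h).1; omega
  · intro x hx y hy hg
    beta_reduce at hg
    rcases memsplit x hx with h1 | h1 | h1 <;> rcases memsplit y hy with h2 | h2 | h2
    · rw [if_pos h1, if_pos h2] at hg; exact heNinj x h1 y h2 hg
    · rw [if_pos h1, if_neg (hkj' y h2), if_pos h2] at hg
      have := heN4 x h1; have := heN4 _ (Pkj y h2).1; omega
    · rw [if_pos h1, if_neg (hlj' y h2), if_neg (hlk' y h2)] at hg
      have := heN4 x h1; have := heN4 _ (Plj y h2).1; omega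
    · rw [if_neg (hkj' x h1), if_pos h1, if_pos h2] at hg
      have := heN4 y h2; have := heN4 _ (Pkj x h1).1; omega
    · rw [if_neg (hkj' x h1), if_pos h1, if_neg (hkj' y h2), if_pos h2] at hg
      have h3 : σkj x = σkj y := heNinj _ (Pkj x h1).1 _ (Pkj y h2).1 (by omega)
      rw [← invkj x h1, ← invkj y h2, h3]
    · rw [if_neg (hkj' x h1), if_pos h1, if_neg (hlj' y h2), if_neg (hlk' y h2)] at hg
      have := heN4 _ (Pkj x h1).1; have := heN4 _ (Plj y h2).1; omega
    · rw [if_neg (hlj' x h1), if_neg (hlk' x h1), if_pos h2] at hg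
      have := heN4 y h2; have := heN4 _ (Plj x h1).1; omega
    · rw [if_neg (hlj' x h1), if_neg (hlk' x h1), if_neg (hkj' y h2), if_pos h2] at hg
      have := heN4 _ (Plj x h1).1; have := heN4 _ (Pkj y h2).1; omega
    · rw [if_neg (hlj' x h1), if_neg (hlk' x h1), if_neg (hlj' y h2), if_neg (hlk' y h2)] at hg
      have h3 : σlj x = σlj y := heNinj _ (Plj x h1).1 _ (Plj y h2).1 (by omega)
      rw [← invlj x h1, ← invlj y h2, h3]
  · intro x hx y hy
    beta_reduce
    rcases memsplit x hx with h1 | h1 | h1 <;> rcases memsplit y hy with h2 | h2 | h2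
    · rw [if_pos h1, if_pos h2, sameJ x h1 y h2]
      have := heN4 x h1; have := heN4 y h2; omega
    · rw [if_pos h1, if_neg (hkj' y h2), if_pos h2, crossJK x h1 y h2]
      have := heN4 x h1; have := heN4 _ (Pkj y h2).1; omega
    · rw [if_pos h1, if_neg (hlj' y h2), if_neg (hlk' y h2), crossJL x h1 y h2]
      have := heN4 x h1; have := heN4 _ (Plj y h2).1; omega
    · rw [if_neg (hkj' x h1), if_pos h1, if_pos h2, H.adj_comm, crossJK y h2 x h1]
      have := heN4 y h2; have := heN4 _ (Pkj x h1).1; omega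
    · rw [if_neg (hkj' x h1), if_pos h1, if_neg (hkj' y h2), if_pos h2, sameK x h1 y h2]
      have := heN4 _ (Pkj x h1).1; have := heN4 _ (Pkj y h2).1; omega
    · rw [if_neg (hkj' x h1), if_pos h1, if_neg (hlj' y h2), if_neg (hlk' y h2),
        crossKL x h1 y h2]
      have := heN4 _ (Pkj x h1).1; have := heN4 _ (Plj y h2).1; omega
    · rw [if_neg (hlj' x h1), if_neg (hlk' x h1), if_pos h2, H.adj_comm, crossJL y h2 x h1]
      have := heN4 y h2; have := heN4 _ (Plj x h1).1; omega
    · rw [if_neg (hlj' x h1), if_neg (hlk' x h1), if_neg (hkj' y h2), if_pos h2, H.adj_comm,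
        crossKL y h2 x h1]
      have := heN4 _ (Pkj y h2).1; have := heN4 _ (Plj x h1).1; omega
    · rw [if_neg (hlj' x h1), if_neg (hlk' x h1), if_neg (hlj' y h2), if_neg (hlk' y h2),
        sameL x h1 y h2]
      have := heN4 _ (Plj x h1).1; have := heN4 _ (Plj y h2).1; omega
end

section
/- Let H be a K_5-free simple graph and let A_i, A_j, A_k, A_ℓ be pairwise disjoint cliques of H, each of size 4. Suppose that each of the three induced subgraphs H[A_i ∪ A_j ∪ A_k], H[A_i ∪ A_j ∪ A_ℓ] and H[A_i ∪ A_k ∪ A_ℓ] is isomorphic to the Turán graph T(12,4). Then H[A_j ∪ A_k ∪ A_ℓ] is also isomorphic to T(12,4); moreover, there exists a family of 24 cliques of H, each of size 4, such that every triangle of H whose three vertices lie in three different sets among A_i, A_j, A_k, A_ℓ is contained in some clique of the family. -/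
open Finset SimpleGraph

open Classical in
noncomputable def pick {V : Type*} (p : V → Prop) (B : Finset V) (dflt : V) : V :=
  if h : ∃ x ∈ B, p x then h.choose else dflt

lemma pick_spec {V : Type*} {p : V → Prop} {B : Finset V} {dflt : V}
    (h : ∃ x ∈ B, p x) : pick p B dflt ∈ B ∧ p (pick p B dflt) := by
  classical
  rw [pick]
  rw [dif_pos h]
  exact h.choose_spec

lemma master_on {V : Type*} (H : SimpleGraph V) (Ai S : Finset V) (g : V → Fin 4)
    (hadj : ∀ x ∈ S, ∀ y ∈ S, (H.Adj x y ↔ g x ≠ g y))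
    (hsub : Ai ⊆ S)
    (hginj : ∀ a ∈ Ai, ∀ b ∈ Ai, g a = g b → a = b)
    (col : V → V)
    (hcol : ∀ x ∈ S, col x ∈ Ai ∧ ¬H.Adj (col x) x)
    {x y : V} (hx : x ∈ S) (hy : y ∈ S) :
    H.Adj x y ↔ col x ≠ col y := by
  obtain ⟨hcx, hax⟩ := hcol x hx
  obtain ⟨hcy, hay⟩ := hcol y hy
  have hgx : g (col x) = g x := by
    by_contra h; exact hax ((hadj _ (hsub hcx) x hx).mpr h)
  have hgy : g (col y) = g y := by
    by_contra h; exact hay ((hadj _ (hsub hcy) y hy).mpr h)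
  rw [hadj x hx y hy]
  constructor
  · intro h hc; exact h (by rw [← hgx, ← hgy, hc])
  · intro h hg; exact h (hginj _ hcx _ hcy (by rw [hgx, hgy, hg]))

lemma mkPerm (n0 n1 n2 n3 : Fin 4) (h01 : n0 ≠ n1) (h02 : n0 ≠ n2) (h03 : n0 ≠ n3)
    (h12 : n1 ≠ n2) (h13 : n1 ≠ n3) (h23 : n2 ≠ n3) :
    ∃ σ : Equiv.Perm (Fin 4), σ 0 = n0 ∧ σ 1 = n1 ∧ σ 2 = n2 ∧ σ 3 = n3 := by
  have hinj : Function.Injective ![n0, n1, n2, n3] := by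
    intro x y h
    fin_cases x <;> fin_cases y <;> simp_all
  refine ⟨Equiv.ofBijective _ (Finite.injective_iff_bijective.mp hinj), ?_, ?_, ?_, ?_⟩ <;>
    simp [Equiv.ofBijective]


lemma turan_f {V : Type*} [DecidableEq V] (H : SimpleGraph V) (A B C : Finset V)
    (hA : A.card = 4) (hB : B.card = 4) (hC : C.card = 4)
    (hclA : H.IsClique (A : Set V)) (hclB : H.IsClique (B : Set V)) (hclC : H.IsClique (C : Set V))
    (e : H.induce ((A ∪ B ∪ C : Finset V) : Set V) ≃g turanGraph 12 4) :
    ∃ f : V → Fin 4,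
      (∀ x ∈ A ∪ B ∪ C, ∀ y ∈ A ∪ B ∪ C, (H.Adj x y ↔ f x ≠ f y)) ∧
      (∀ D : Finset V, (D = A ∨ D = B ∨ D = C) → ∀ v : Fin 4, ∃! a, a ∈ D ∧ f a = v) := by
  classical
  set S : Set V := ((A ∪ B ∪ C : Finset V) : Set V) with hS
  set f : V → Fin 4 := fun x =>
    if hx : x ∈ S then ⟨(e ⟨x, hx⟩ : Fin 12).val % 4, Nat.mod_lt _ (by norm_num)⟩ else 0 with hf
  have key : ∀ x ∈ A ∪ B ∪ C, ∀ y ∈ A ∪ B ∪ C, (H.Adj x y ↔ f x ≠ f y) := by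
    intro x hx y hy
    have hx' : x ∈ S := by simpa [hS] using hx
    have hy' : y ∈ S := by simpa [hS] using hy
    have h1 := e.map_rel_iff (a := ⟨x, hx'⟩) (b := ⟨y, hy'⟩)
    simp only [comap_adj, Function.Embedding.coe_subtype] at h1
    rw [← h1]
    simp only [hf, dif_pos hx', dif_pos hy', turanGraph, ne_eq, Fin.mk.injEq]
  refine ⟨f, key, ?_⟩
  intro D hD v
  have hD4 : D.card = 4 := by rcases hD with h | h | h <;> subst h <;> assumption
  have hDcl : H.IsClique (D : Set V) := by rcases hD with h | h | h <;> subst h <;> assumption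
  have hDsub : D ⊆ A ∪ B ∪ C := by
    rcases hD with h | h | h <;> subst h <;> intro x hx <;> simp [hx]
  have hinj : ∀ a ∈ D, ∀ b ∈ D, f a = f b → a = b := by
    intro a ha b hb hfab
    by_contra hne
    have : H.Adj a b := hDcl (by simpa using ha) (by simpa using hb) hne
    exact ((key a (hDsub ha) b (hDsub hb)).mp this) hfab
  have himg : D.image f = Finset.univ := by
    apply Finset.eq_univ_of_card
    rw [Finset.card_image_of_injOn (fun a ha b hb => hinj a ha b hb), hD4]
    simp
  have hv : v ∈ D.image f := by rw [himg]; exact Finset.mem_univ v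
  obtain ⟨a, ha, hav⟩ := Finset.mem_image.mp hv
  exact ⟨a, ⟨ha, hav⟩, fun b ⟨hb, hbv⟩ => hinj b hb a ha (by rw [hav, hbv])⟩


set_option maxHeartbeats 2000000 in
theorem stmt16 {V : Type*} [DecidableEq V] (H : SimpleGraph V) (hH : H.CliqueFree 5)
    (Ai Aj Ak Al : Finset V)
    (hij : Disjoint Ai Aj) (hik : Disjoint Ai Ak) (hil : Disjoint Ai Al)
    (hjk : Disjoint Aj Ak) (hjl : Disjoint Aj Al) (hkl : Disjoint Ak Al)
    (hi4 : Ai.card = 4) (hj4 : Aj.card = 4) (hk4 : Ak.card = 4) (hl4 : Al.card = 4)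
    (hi : H.IsClique (Ai : Set V)) (hj : H.IsClique (Aj : Set V))
    (hk : H.IsClique (Ak : Set V)) (hl : H.IsClique (Al : Set V))
    (iijk : Nonempty (H.induce ((Ai ∪ Aj ∪ Ak : Finset V) : Set V) ≃g SimpleGraph.turanGraph 12 4))
    (iijl : Nonempty (H.induce ((Ai ∪ Aj ∪ Al : Finset V) : Set V) ≃g SimpleGraph.turanGraph 12 4))
    (iikl : Nonempty (H.induce ((Ai ∪ Ak ∪ Al : Finset V) : Set V) ≃g SimpleGraph.turanGraph 12 4)) :
    Nonempty (H.induce ((Aj ∪ Ak ∪ Al : Finset V) : Set V) ≃g SimpleGraph.turanGraph 12 4) ∧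
      ∃ 𝒞 : Finset (Finset V), 𝒞.card = 24 ∧ (∀ K ∈ 𝒞, H.IsNClique 4 K) ∧
        ∀ T : Finset V, H.IsNClique 3 T →
          (∃ B1 ∈ ({Ai, Aj, Ak, Al} : Finset (Finset V)),
            ∃ B2 ∈ ({Ai, Aj, Ak, Al} : Finset (Finset V)),
            ∃ B3 ∈ ({Ai, Aj, Ak, Al} : Finset (Finset V)),
              B1 ≠ B2 ∧ B1 ≠ B3 ∧ B2 ≠ B3 ∧
              (T ∩ B1).card = 1 ∧ (T ∩ B2).card = 1 ∧ (T ∩ B3).card = 1) →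
          ∃ K ∈ 𝒞, T ⊆ K := by
  classical
  obtain ⟨e1⟩ := iijk
  obtain ⟨e2⟩ := iijl
  obtain ⟨e3⟩ := iikl
  obtain ⟨f1, hadj1, hfib1⟩ := turan_f H Ai Aj Ak hi4 hj4 hk4 hi hj hk e1
  obtain ⟨f2, hadj2, hfib2⟩ := turan_f H Ai Aj Al hi4 hj4 hl4 hi hj hl e2
  obtain ⟨f3, hadj3, hfib3⟩ := turan_f H Ai Ak Al hi4 hk4 hl4 hi hk hl e3
  have hinj1 : ∀ a ∈ Ai, ∀ b ∈ Ai, f1 a = f1 b → a = b := fun a ha b hb h =>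
    (hfib1 Ai (Or.inl rfl) (f1 b)).unique ⟨ha, h⟩ ⟨hb, rfl⟩
  have hinj2 : ∀ a ∈ Ai, ∀ b ∈ Ai, f2 a = f2 b → a = b := fun a ha b hb h =>
    (hfib2 Ai (Or.inl rfl) (f2 b)).unique ⟨ha, h⟩ ⟨hb, rfl⟩
  have hinj3 : ∀ a ∈ Ai, ∀ b ∈ Ai, f3 a = f3 b → a = b := fun a ha b hb h =>
    (hfib3 Ai (Or.inl rfl) (f3 b)).unique ⟨ha, h⟩ ⟨hb, rfl⟩
  -- membership helpers
  have mS1 : ∀ {x : V}, (x ∈ Ai ∨ x ∈ Aj ∨ x ∈ Ak) → x ∈ Ai ∪ Aj ∪ Ak := by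
    intro x h; simp only [Finset.mem_union]; tauto
  have mS2 : ∀ {x : V}, (x ∈ Ai ∨ x ∈ Aj ∨ x ∈ Al) → x ∈ Ai ∪ Aj ∪ Al := by
    intro x h; simp only [Finset.mem_union]; tauto
  have mS3 : ∀ {x : V}, (x ∈ Ai ∨ x ∈ Ak ∨ x ∈ Al) → x ∈ Ai ∪ Ak ∪ Al := by
    intro x h; simp only [Finset.mem_union]; tauto
  have mU : ∀ {x : V}, (x ∈ Ai ∨ x ∈ Aj ∨ x ∈ Ak ∨ x ∈ Al) → x ∈ Ai ∪ Aj ∪ Ak ∪ Al := by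
    intro x h; simp only [Finset.mem_union]; tauto
  have rowOf : ∀ {x : V}, x ∈ Ai ∪ Aj ∪ Ak ∪ Al → (x ∈ Ai ∨ x ∈ Aj ∨ x ∈ Ak ∨ x ∈ Al) := by
    intro x h; simp only [Finset.mem_union] at h; tauto
  -- existence of non-neighbours in Ai
  have hEx : ∀ x, (x ∈ Aj ∨ x ∈ Ak ∨ x ∈ Al) → ∃ a ∈ Ai, ¬H.Adj a x := by
    intro x hx
    rcases hx with hx | hx | hx
    · obtain ⟨a, ⟨ha, hfa⟩, -⟩ := hfib1 Ai (Or.inl rfl) (f1 x)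
      exact ⟨a, ha, fun hAdj => (hadj1 a (mS1 (Or.inl ha)) x (mS1 (Or.inr (Or.inl hx)))).mp hAdj hfa⟩
    · obtain ⟨a, ⟨ha, hfa⟩, -⟩ := hfib1 Ai (Or.inl rfl) (f1 x)
      exact ⟨a, ha, fun hAdj => (hadj1 a (mS1 (Or.inl ha)) x (mS1 (Or.inr (Or.inr hx)))).mp hAdj hfa⟩
    · obtain ⟨a, ⟨ha, hfa⟩, -⟩ := hfib2 Ai (Or.inl rfl) (f2 x)
      exact ⟨a, ha, fun hAdj => (hadj2 a (mS2 (Or.inl ha)) x (mS2 (Or.inr (Or.inr hx)))).mp hAdj hfa⟩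
  -- the column function
  obtain ⟨col, hcolAi, hcol⟩ :
      ∃ col : V → V, (∀ x ∈ Ai, col x = x) ∧
        (∀ x ∈ Ai ∪ Aj ∪ Ak ∪ Al, col x ∈ Ai ∧ ¬H.Adj (col x) x) := by
    refine ⟨fun x => if x ∈ Ai then x else pick (fun a => ¬H.Adj a x) Ai x,
      fun x hx => if_pos hx, ?_⟩
    intro x hx
    by_cases h : x ∈ Ai
    · simp only [if_pos h]
      exact ⟨h, fun ha => H.irrefl ha⟩
    · simp only [if_neg h]
      have hx' : x ∈ Aj ∨ x ∈ Ak ∨ x ∈ Al := by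
        rcases rowOf hx with h' | h' | h' | h' <;> tauto
      exact pick_spec (hEx x hx')
  -- the master adjacency relation
  have hS1U : Ai ∪ Aj ∪ Ak ⊆ Ai ∪ Aj ∪ Ak ∪ Al := by
    intro z hz; simp only [Finset.mem_union] at hz ⊢; tauto
  have hS2U : Ai ∪ Aj ∪ Al ⊆ Ai ∪ Aj ∪ Ak ∪ Al := by
    intro z hz; simp only [Finset.mem_union] at hz ⊢; tauto
  have hS3U : Ai ∪ Ak ∪ Al ⊆ Ai ∪ Aj ∪ Ak ∪ Al := by
    intro z hz; simp only [Finset.mem_union] at hz ⊢; tauto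
  have M1 : ∀ {x : V}, x ∈ Ai ∪ Aj ∪ Ak → ∀ {y : V}, y ∈ Ai ∪ Aj ∪ Ak →
      (H.Adj x y ↔ col x ≠ col y) := fun hx _ hy => master_on H Ai (Ai ∪ Aj ∪ Ak) f1 hadj1
    (fun a ha => mS1 (Or.inl ha)) hinj1 col (fun z hz => hcol z (hS1U hz)) hx hy
  have M2 : ∀ {x : V}, x ∈ Ai ∪ Aj ∪ Al → ∀ {y : V}, y ∈ Ai ∪ Aj ∪ Al →
      (H.Adj x y ↔ col x ≠ col y) := fun hx _ hy => master_on H Ai (Ai ∪ Aj ∪ Al) f2 hadj2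
    (fun a ha => mS2 (Or.inl ha)) hinj2 col (fun z hz => hcol z (hS2U hz)) hx hy
  have M3 : ∀ {x : V}, x ∈ Ai ∪ Ak ∪ Al → ∀ {y : V}, y ∈ Ai ∪ Ak ∪ Al →
      (H.Adj x y ↔ col x ≠ col y) := fun hx _ hy => master_on H Ai (Ai ∪ Ak ∪ Al) f3 hadj3
    (fun a ha => mS3 (Or.inl ha)) hinj3 col (fun z hz => hcol z (hS3U hz)) hx hy
  have hmaster : ∀ x ∈ Ai ∪ Aj ∪ Ak ∪ Al, ∀ y ∈ Ai ∪ Aj ∪ Ak ∪ Al,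
      (H.Adj x y ↔ col x ≠ col y) := by
    intro x hx y hy
    rcases rowOf hx with h | h | h | h <;> rcases rowOf hy with h' | h' | h' | h'
    exacts [M1 (mS1 (Or.inl h)) (mS1 (Or.inl h')),
      M1 (mS1 (Or.inl h)) (mS1 (Or.inr (Or.inl h'))),
      M1 (mS1 (Or.inl h)) (mS1 (Or.inr (Or.inr h'))),
      M2 (mS2 (Or.inl h)) (mS2 (Or.inr (Or.inr h'))),
      M1 (mS1 (Or.inr (Or.inl h))) (mS1 (Or.inl h')),
      M1 (mS1 (Or.inr (Or.inl h))) (mS1 (Or.inr (Or.inl h'))),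
      M1 (mS1 (Or.inr (Or.inl h))) (mS1 (Or.inr (Or.inr h'))),
      M2 (mS2 (Or.inr (Or.inl h))) (mS2 (Or.inr (Or.inr h'))),
      M1 (mS1 (Or.inr (Or.inr h))) (mS1 (Or.inl h')),
      M1 (mS1 (Or.inr (Or.inr h))) (mS1 (Or.inr (Or.inl h'))),
      M1 (mS1 (Or.inr (Or.inr h))) (mS1 (Or.inr (Or.inr h'))),
      M3 (mS3 (Or.inr (Or.inl h))) (mS3 (Or.inr (Or.inr h'))),
      M2 (mS2 (Or.inr (Or.inr h))) (mS2 (Or.inl h')),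
      M2 (mS2 (Or.inr (Or.inr h))) (mS2 (Or.inr (Or.inl h'))),
      M3 (mS3 (Or.inr (Or.inr h))) (mS3 (Or.inr (Or.inl h'))),
      M2 (mS2 (Or.inr (Or.inr h))) (mS2 (Or.inr (Or.inr h')))]
  -- col is injective on each row
  have hcolinj : ∀ B : Finset V, (B = Ai ∨ B = Aj ∨ B = Ak ∨ B = Al) →
      ∀ x ∈ B, ∀ y ∈ B, col x = col y → x = y := by
    intro B hB x hx y hy hcxy
    have hcl : H.IsClique (B : Set V) := by rcases hB with rfl | rfl | rfl | rfl <;> assumption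
    have hBU : B ⊆ Ai ∪ Aj ∪ Ak ∪ Al := by
      rcases hB with rfl | rfl | rfl | rfl <;> intro z hz <;> exact mU (by tauto)
    by_contra hne
    exact (hmaster x (hBU hx) y (hBU hy)).mp (hcl (by simpa using hx) (by simpa using hy) hne) hcxy
  -- col is surjective from each of Aj, Ak, Al onto Ai
  have hcolsurj : ∀ B : Finset V, (B = Aj ∨ B = Ak ∨ B = Al) → ∀ a ∈ Ai, ∃ x ∈ B, col x = a := by
    intro B hB
    have hB4 : B.card = 4 := by rcases hB with rfl | rfl | rfl <;> assumption
    have hBU : B ⊆ Ai ∪ Aj ∪ Ak ∪ Al := by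
      rcases hB with rfl | rfl | rfl <;> intro z hz <;> exact mU (by tauto)
    have himg : B.image col = Ai := by
      apply Finset.eq_of_subset_of_card_le
      · intro a ha
        obtain ⟨x, hx, rfl⟩ := Finset.mem_image.mp ha
        exact (hcol x (hBU hx)).1
      · rw [Finset.card_image_of_injOn (fun x hx y hy => hcolinj B (by tauto) x hx y hy), hB4, hi4]
    intro a ha
    rw [← himg] at ha
    obtain ⟨x, hx, hxa⟩ := Finset.mem_image.mp ha
    exact ⟨x, hx, hxa⟩
  -- partner functions
  obtain ⟨pj, hpj⟩ : ∃ p : V → V, ∀ a ∈ Ai, p a ∈ Aj ∧ col (p a) = a :=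
    ⟨fun a => pick (fun x => col x = a) Aj a,
      fun a ha => pick_spec (hcolsurj Aj (Or.inl rfl) a ha)⟩
  obtain ⟨pk, hpk⟩ : ∃ p : V → V, ∀ a ∈ Ai, p a ∈ Ak ∧ col (p a) = a :=
    ⟨fun a => pick (fun x => col x = a) Ak a,
      fun a ha => pick_spec (hcolsurj Ak (Or.inr (Or.inl rfl)) a ha)⟩
  obtain ⟨pl, hpl⟩ : ∃ p : V → V, ∀ a ∈ Ai, p a ∈ Al ∧ col (p a) = a :=
    ⟨fun a => pick (fun x => col x = a) Al a,
      fun a ha => pick_spec (hcolsurj Al (Or.inr (Or.inr rfl)) a ha)⟩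
  have hpj_eq : ∀ x ∈ Aj, pj (col x) = x := by
    intro x hx
    have hcx : col x ∈ Ai := (hcol x (mU (by tauto))).1
    exact hcolinj Aj (by tauto) _ (hpj _ hcx).1 x hx (by rw [(hpj _ hcx).2])
  have hpk_eq : ∀ x ∈ Ak, pk (col x) = x := by
    intro x hx
    have hcx : col x ∈ Ai := (hcol x (mU (by tauto))).1
    exact hcolinj Ak (by tauto) _ (hpk _ hcx).1 x hx (by rw [(hpk _ hcx).2])
  have hpl_eq : ∀ x ∈ Al, pl (col x) = x := by
    intro x hx
    have hcx : col x ∈ Ai := (hcol x (mU (by tauto))).1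
    exact hcolinj Al (by tauto) _ (hpl _ hcx).1 x hx (by rw [(hpl _ hcx).2])
  -- enumeration of Ai
  obtain ⟨v, w, hvmem, hvw, hwv⟩ :
      ∃ (v : Fin 4 → V) (w : V → Fin 4), (∀ n, v n ∈ Ai) ∧ (∀ a ∈ Ai, v (w a) = a) ∧
        (∀ n, w (v n) = n) := by
    have hcard : Fintype.card { x // x ∈ Ai } = 4 := by simp [hi4]
    let ei := (Fintype.equivFinOfCardEq hcard).symm
    refine ⟨fun n => (ei n : V), fun a => if h : a ∈ Ai then ei.symm ⟨a, h⟩ else 0,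
      fun n => (ei n).2, fun a ha => by simp [dif_pos ha], fun n => ?_⟩
    simp only [dif_pos (ei n).2]
    simp
  have hvinj : ∀ m n : Fin 4, v m = v n → m = n := by
    intro m n h
    rw [← hwv m, ← hwv n, h]
  have hvsurj : ∀ a ∈ Ai, ∃ n, v n = a := fun a ha => ⟨w a, hvw a ha⟩
  -- the 24 cliques
  set Kf : Equiv.Perm (Fin 4) → Finset V :=
    fun t => {v (t 0), pj (v (t 1)), pk (v (t 2)), pl (v (t 3))} with hKf
  have hKmem : ∀ t : Equiv.Perm (Fin 4),
      v (t 0) ∈ Ai ∧ pj (v (t 1)) ∈ Aj ∧ pk (v (t 2)) ∈ Ak ∧ pl (v (t 3)) ∈ Al :=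
    fun t => ⟨hvmem _, (hpj _ (hvmem _)).1, (hpk _ (hvmem _)).1, (hpl _ (hvmem _)).1⟩
  have hKcol : ∀ t : Equiv.Perm (Fin 4),
      col (v (t 0)) = v (t 0) ∧ col (pj (v (t 1))) = v (t 1) ∧
        col (pk (v (t 2))) = v (t 2) ∧ col (pl (v (t 3))) = v (t 3) :=
    fun t => ⟨hcolAi _ (hvmem _), (hpj _ (hvmem _)).2, (hpk _ (hvmem _)).2, (hpl _ (hvmem _)).2⟩
  have hvtne : ∀ (t : Equiv.Perm (Fin 4)) (m n : Fin 4), m ≠ n → v (t m) ≠ v (t n) :=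
    fun t m n hmn h => hmn (t.injective (hvinj _ _ h))
  have hKadj : ∀ t : Equiv.Perm (Fin 4),
      H.Adj (v (t 0)) (pj (v (t 1))) ∧ H.Adj (v (t 0)) (pk (v (t 2))) ∧
      H.Adj (v (t 0)) (pl (v (t 3))) ∧ H.Adj (pj (v (t 1))) (pk (v (t 2))) ∧
      H.Adj (pj (v (t 1))) (pl (v (t 3))) ∧ H.Adj (pk (v (t 2))) (pl (v (t 3))) := by
    intro t
    obtain ⟨m0, m1, m2, m3⟩ := hKmem t
    obtain ⟨c0, c1, c2, c3⟩ := hKcol t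
    refine ⟨?_, ?_, ?_, ?_, ?_, ?_⟩
    · exact (hmaster _ (mU (by tauto)) _ (mU (by tauto))).mpr
        (by rw [c0, c1]; exact hvtne t 0 1 (by decide))
    · exact (hmaster _ (mU (by tauto)) _ (mU (by tauto))).mpr
        (by rw [c0, c2]; exact hvtne t 0 2 (by decide))
    · exact (hmaster _ (mU (by tauto)) _ (mU (by tauto))).mpr
        (by rw [c0, c3]; exact hvtne t 0 3 (by decide))
    · exact (hmaster _ (mU (by tauto)) _ (mU (by tauto))).mpr
        (by rw [c1, c2]; exact hvtne t 1 2 (by decide))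
    · exact (hmaster _ (mU (by tauto)) _ (mU (by tauto))).mpr
        (by rw [c1, c3]; exact hvtne t 1 3 (by decide))
    · exact (hmaster _ (mU (by tauto)) _ (mU (by tauto))).mpr
        (by rw [c2, c3]; exact hvtne t 2 3 (by decide))
  have hK4 : ∀ t : Equiv.Perm (Fin 4), H.IsNClique 4 (Kf t) := by
    intro t
    obtain ⟨a01, a02, a03, a12, a13, a23⟩ := hKadj t
    constructor
    · intro x hx y hy hne
      simp only [hKf, coe_insert, Set.mem_insert_iff, coe_singleton,
        Set.mem_singleton_iff] at hx hy
      rcases hx with rfl | rfl | rfl | rfl <;> rcases hy with rfl | rfl | rfl | rfl <;>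
        first
          | exact absurd rfl hne
          | exact a01 | exact a01.symm | exact a02 | exact a02.symm
          | exact a03 | exact a03.symm | exact a12 | exact a12.symm
          | exact a13 | exact a13.symm | exact a23 | exact a23.symm
    · rw [hKf]
      rw [Finset.card_insert_of_notMem (by
          simp only [Finset.mem_insert, Finset.mem_singleton]
          push_neg
          exact ⟨a01.ne, a02.ne, a03.ne⟩),
        Finset.card_insert_of_notMem (by
          simp only [Finset.mem_insert, Finset.mem_singleton]
          push_neg
          exact ⟨a12.ne, a13.ne⟩),
        Finset.card_insert_of_notMem (by
          simp only [Finset.mem_singleton]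
          exact a23.ne),
        Finset.card_singleton]
  have hKfinj : Function.Injective Kf := by
    intro s t hst
    have key : ∀ m : Fin 4, ∀ z, z ∈ Kf t ↔
        (z = v (t 0) ∨ z = pj (v (t 1)) ∨ z = pk (v (t 2)) ∨ z = pl (v (t 3))) := by
      intro m z
      simp [hKf, Finset.mem_insert, Finset.mem_singleton]
    obtain ⟨sm0, sm1, sm2, sm3⟩ := hKmem s
    obtain ⟨tm0, tm1, tm2, tm3⟩ := hKmem t
    have h0 : s 0 = t 0 := by
      have hz : v (s 0) ∈ Kf t := hst ▸ (by simp [hKf])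
      rcases (key 0 _).mp hz with h | h | h | h
      · exact hvinj _ _ h
      · exact absurd (h ▸ sm0) (Finset.disjoint_left.mp hij · tm1)
      · exact absurd (h ▸ sm0) (Finset.disjoint_left.mp hik · tm2)
      · exact absurd (h ▸ sm0) (Finset.disjoint_left.mp hil · tm3)
    have h1 : s 1 = t 1 := by
      have hz : pj (v (s 1)) ∈ Kf t := hst ▸ (by simp [hKf])
      rcases (key 1 _).mp hz with h | h | h | h
      · exact absurd (h ▸ sm1) (fun hc => Finset.disjoint_left.mp hij tm0 hc)
      · have : col (pj (v (s 1))) = col (pj (v (t 1))) := by rw [h]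
        rw [(hpj _ (hvmem _)).2, (hpj _ (hvmem _)).2] at this
        exact hvinj _ _ this
      · exact absurd (h ▸ sm1) (fun hc => Finset.disjoint_left.mp hjk hc tm2)
      · exact absurd (h ▸ sm1) (fun hc => Finset.disjoint_left.mp hjl hc tm3)
    have h2 : s 2 = t 2 := by
      have hz : pk (v (s 2)) ∈ Kf t := hst ▸ (by simp [hKf])
      rcases (key 2 _).mp hz with h | h | h | h
      · exact absurd (h ▸ sm2) (fun hc => Finset.disjoint_left.mp hik tm0 hc)
      · exact absurd (h ▸ sm2) (fun hc => Finset.disjoint_left.mp hjk tm1 hc)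
      · have : col (pk (v (s 2))) = col (pk (v (t 2))) := by rw [h]
        rw [(hpk _ (hvmem _)).2, (hpk _ (hvmem _)).2] at this
        exact hvinj _ _ this
      · exact absurd (h ▸ sm2) (fun hc => Finset.disjoint_left.mp hkl hc tm3)
    have h3 : s 3 = t 3 := by
      have hz : pl (v (s 3)) ∈ Kf t := hst ▸ (by simp [hKf])
      rcases (key 3 _).mp hz with h | h | h | h
      · exact absurd (h ▸ sm3) (fun hc => Finset.disjoint_left.mp hil tm0 hc)
      · exact absurd (h ▸ sm3) (fun hc => Finset.disjoint_left.mp hjl tm1 hc)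
      · exact absurd (h ▸ sm3) (fun hc => Finset.disjoint_left.mp hkl tm2 hc)
      · have : col (pl (v (s 3))) = col (pl (v (t 3))) := by rw [h]
        rw [(hpl _ (hvmem _)).2, (hpl _ (hvmem _)).2] at this
        exact hvinj _ _ this
    apply Equiv.ext
    intro n
    fin_cases n
    · exact h0
    · exact h1
    · exact h2
    · exact h3
  have hCcard : (Finset.univ.image Kf).card = 24 := by
    rw [Finset.card_image_of_injective _ hKfinj, Finset.card_univ, Fintype.card_perm]
    simp [Nat.factorial]
  -- building a clique through prescribed columns
  have buildK : ∀ c0 c1 c2 c3 : V, c0 ∈ Ai → c1 ∈ Ai → c2 ∈ Ai → c3 ∈ Ai →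
      c0 ≠ c1 → c0 ≠ c2 → c0 ≠ c3 → c1 ≠ c2 → c1 ≠ c3 → c2 ≠ c3 →
      ∃ t : Equiv.Perm (Fin 4), Kf t = {c0, pj c1, pk c2, pl c3} := by
    intro c0 c1 c2 c3 m0 m1 m2 m3 d01 d02 d03 d12 d13 d23
    obtain ⟨n0, hn0⟩ := hvsurj c0 m0
    obtain ⟨n1, hn1⟩ := hvsurj c1 m1
    obtain ⟨n2, hn2⟩ := hvsurj c2 m2
    obtain ⟨n3, hn3⟩ := hvsurj c3 m3
    obtain ⟨t, ht0, ht1, ht2, ht3⟩ := mkPerm n0 n1 n2 n3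
      (fun h => d01 (by rw [← hn0, ← hn1, h])) (fun h => d02 (by rw [← hn0, ← hn2, h]))
      (fun h => d03 (by rw [← hn0, ← hn3, h])) (fun h => d12 (by rw [← hn1, ← hn2, h]))
      (fun h => d13 (by rw [← hn1, ← hn3, h])) (fun h => d23 (by rw [← hn2, ← hn3, h]))
    exact ⟨t, by simp only [hKf]; rw [ht0, ht1, ht2, ht3, hn0, hn1, hn2, hn3]⟩
  -- distinct blocks are disjoint
  have hrowdisj : ∀ B1 ∈ ({Ai, Aj, Ak, Al} : Finset (Finset V)),
      ∀ B2 ∈ ({Ai, Aj, Ak, Al} : Finset (Finset V)), B1 ≠ B2 → Disjoint B1 B2 := by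
    intro B1 h1 B2 h2 hne
    simp only [Finset.mem_insert, Finset.mem_singleton] at h1 h2
    rcases h1 with rfl | rfl | rfl | rfl <;> rcases h2 with rfl | rfl | rfl | rfl <;>
      first
        | exact absurd rfl hne
        | exact hij | exact hij.symm | exact hik | exact hik.symm
        | exact hil | exact hil.symm | exact hjk | exact hjk.symm
        | exact hjl | exact hjl.symm | exact hkl | exact hkl.symm
  have hrowU : ∀ B ∈ ({Ai, Aj, Ak, Al} : Finset (Finset V)), B ⊆ Ai ∪ Aj ∪ Ak ∪ Al := by
    intro B hB z hz
    simp only [Finset.mem_insert, Finset.mem_singleton] at hB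
    rcases hB with rfl | rfl | rfl | rfl
    exacts [mU (Or.inl hz), mU (Or.inr (Or.inl hz)), mU (Or.inr (Or.inr (Or.inl hz))),
      mU (Or.inr (Or.inr (Or.inr hz)))]
  -- the covering property
  have hcover : ∀ T : Finset V, H.IsNClique 3 T →
      (∃ B1 ∈ ({Ai, Aj, Ak, Al} : Finset (Finset V)),
        ∃ B2 ∈ ({Ai, Aj, Ak, Al} : Finset (Finset V)),
        ∃ B3 ∈ ({Ai, Aj, Ak, Al} : Finset (Finset V)),
          B1 ≠ B2 ∧ B1 ≠ B3 ∧ B2 ≠ B3 ∧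
          (T ∩ B1).card = 1 ∧ (T ∩ B2).card = 1 ∧ (T ∩ B3).card = 1) →
      ∃ K ∈ Finset.univ.image Kf, T ⊆ K := by
    intro T hT hcross
    obtain ⟨B1, h1, B2, h2, B3, h3, h12, h13, h23, c1, c2, c3⟩ := hcross
    have d12 : Disjoint (T ∩ B1) (T ∩ B2) :=
      (hrowdisj B1 h1 B2 h2 h12).mono Finset.inter_subset_right Finset.inter_subset_right
    have d13 : Disjoint (T ∩ B1) (T ∩ B3) :=
      (hrowdisj B1 h1 B3 h3 h13).mono Finset.inter_subset_right Finset.inter_subset_right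
    have d23 : Disjoint (T ∩ B2) (T ∩ B3) :=
      (hrowdisj B2 h2 B3 h3 h23).mono Finset.inter_subset_right Finset.inter_subset_right
    have hTsub : T ⊆ B1 ∪ B2 ∪ B3 := by
      rw [← Finset.inter_eq_left]
      apply Finset.eq_of_subset_of_card_le Finset.inter_subset_left
      rw [Finset.inter_union_distrib_left, Finset.inter_union_distrib_left,
        Finset.card_union_of_disjoint (by
          rw [Finset.disjoint_union_left]; exact ⟨d13, d23⟩),
        Finset.card_union_of_disjoint d12, c1, c2, c3, hT.2]
    have hTU : T ⊆ Ai ∪ Aj ∪ Ak ∪ Al := by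
      intro t ht
      rcases Finset.mem_union.mp (hTsub ht) with h | h
      · rcases Finset.mem_union.mp h with h | h
        · exact hrowU B1 h1 h
        · exact hrowU B2 h2 h
      · exact hrowU B3 h3 h
    have hTrow : ∀ B ∈ ({Ai, Aj, Ak, Al} : Finset (Finset V)), (T ∩ B).card ≤ 1 := by
      intro B hB
      rcases eq_or_ne B B1 with rfl | n1
      · exact c1.le
      rcases eq_or_ne B B2 with rfl | n2
      · exact c2.le
      rcases eq_or_ne B B3 with rfl | n3
      · exact c3.le
      have : T ∩ B = ∅ := by
        rw [Finset.eq_empty_iff_forall_notMem]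
        intro t ht
        have htT := Finset.mem_inter.mp ht
        rcases Finset.mem_union.mp (hTsub htT.1) with h | h
        · rcases Finset.mem_union.mp h with h | h
          · exact Finset.disjoint_left.mp (hrowdisj B hB B1 h1 n1) htT.2 h
          · exact Finset.disjoint_left.mp (hrowdisj B hB B2 h2 n2) htT.2 h
        · exact Finset.disjoint_left.mp (hrowdisj B hB B3 h3 n3) htT.2 h
      rw [this]
      simp
    -- decompose T by rows
    have memfam : ∀ B : Finset V, (B = Ai ∨ B = Aj ∨ B = Ak ∨ B = Al) →
        B ∈ ({Ai, Aj, Ak, Al} : Finset (Finset V)) := by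
      intro B hB
      simp only [Finset.mem_insert, Finset.mem_singleton]
      exact hB
    have hTeq : (T ∩ Ai) ∪ (T ∩ Aj) ∪ (T ∩ Ak) ∪ (T ∩ Al) = T := by
      rw [← Finset.inter_union_distrib_left, ← Finset.inter_union_distrib_left,
        ← Finset.inter_union_distrib_left]
      exact Finset.inter_eq_left.mpr hTU
    have hsum : (T ∩ Ai).card + (T ∩ Aj).card + (T ∩ Ak).card + (T ∩ Al).card = 3 := by
      have e1 : Disjoint ((T ∩ Ai) ∪ (T ∩ Aj) ∪ (T ∩ Ak)) (T ∩ Al) := by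
        rw [Finset.disjoint_union_left, Finset.disjoint_union_left]
        exact ⟨⟨hil.mono Finset.inter_subset_right Finset.inter_subset_right,
          hjl.mono Finset.inter_subset_right Finset.inter_subset_right⟩,
          hkl.mono Finset.inter_subset_right Finset.inter_subset_right⟩
      have e2 : Disjoint ((T ∩ Ai) ∪ (T ∩ Aj)) (T ∩ Ak) := by
        rw [Finset.disjoint_union_left]
        exact ⟨hik.mono Finset.inter_subset_right Finset.inter_subset_right,
          hjk.mono Finset.inter_subset_right Finset.inter_subset_right⟩
      have e3 : Disjoint (T ∩ Ai) (T ∩ Aj) :=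
        hij.mono Finset.inter_subset_right Finset.inter_subset_right
      have := hT.2
      rw [← hTeq, Finset.card_union_of_disjoint e1, Finset.card_union_of_disjoint e2,
        Finset.card_union_of_disjoint e3] at this
      omega
    have hbi : (T ∩ Ai).card ≤ 1 := hTrow Ai (memfam Ai (Or.inl rfl))
    have hbj : (T ∩ Aj).card ≤ 1 := hTrow Aj (memfam Aj (Or.inr (Or.inl rfl)))
    have hbk : (T ∩ Ak).card ≤ 1 := hTrow Ak (memfam Ak (Or.inr (Or.inr (Or.inl rfl))))
    have hbl : (T ∩ Al).card ≤ 1 := hTrow Al (memfam Al (Or.inr (Or.inr (Or.inr rfl))))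
    have getone : ∀ B : Finset V, (T ∩ B).card = 1 → ∃ t, T ∩ B = {t} ∧ t ∈ T ∧ t ∈ B := by
      intro B hB1
      obtain ⟨t, ht⟩ := Finset.card_eq_one.mp hB1
      have htm : t ∈ T ∩ B := ht ▸ Finset.mem_singleton_self t
      exact ⟨t, ht, (Finset.mem_inter.mp htm).1, (Finset.mem_inter.mp htm).2⟩
    have hsdiff : ∀ u1 u2 u3 : V, ∃ d ∈ Ai, d ≠ u1 ∧ d ≠ u2 ∧ d ≠ u3 := by
      intro u1 u2 u3
      have hc3 : ({u1, u2, u3} : Finset V).card ≤ 3 := by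
        have i1 := Finset.card_insert_le u1 ({u2, u3} : Finset V)
        have i2 := Finset.card_insert_le u2 ({u3} : Finset V)
        have i3 : ({u3} : Finset V).card = 1 := Finset.card_singleton u3
        omega
      have hpos : 0 < (Ai \ ({u1, u2, u3} : Finset V)).card := by
        have := Finset.le_card_sdiff ({u1, u2, u3} : Finset V) Ai
        omega
      obtain ⟨d, hd⟩ := Finset.card_pos.mp hpos
      rw [Finset.mem_sdiff] at hd
      obtain ⟨hd1, hd2⟩ := hd
      simp only [Finset.mem_insert, Finset.mem_singleton] at hd2
      push_neg at hd2
      exact ⟨d, hd1, hd2.1, hd2.2.1, hd2.2.2⟩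
    have memcol : ∀ t ∈ T, col t ∈ Ai := fun t ht => (hcol t (hTU ht)).1
    have hadjT : ∀ t1 ∈ T, ∀ t2 ∈ T, t1 ≠ t2 → col t1 ≠ col t2 := by
      intro t1 ht1 t2 ht2 hne
      exact (hmaster t1 (hTU ht1) t2 (hTU ht2)).mp
        (hT.1 (Finset.mem_coe.mpr ht1) (Finset.mem_coe.mpr ht2) hne)
    have hdiffrow : ∀ {t1 t2 : V} {B1' B2' : Finset V},
        Disjoint B1' B2' → t1 ∈ B1' → t2 ∈ B2' → t1 ≠ t2 :=
      fun hd m1 m2 he => Finset.disjoint_left.mp hd m1 (he ▸ m2)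
    have hsing : ∀ (B : Finset V) (t0 t : V), T ∩ B = {t0} → t ∈ T → t ∈ B → t = t0 := by
      intro B t0 t he ht hB
      have : t ∈ T ∩ B := Finset.mem_inter.mpr ⟨ht, hB⟩
      rw [he] at this
      exact Finset.mem_singleton.mp this
    have hempty : ∀ (B : Finset V) (t : V), T ∩ B = ∅ → t ∈ T → t ∈ B → False := by
      intro B t he ht hB
      have : t ∈ T ∩ B := Finset.mem_inter.mpr ⟨ht, hB⟩
      rw [he] at this
      exact Finset.notMem_empty t this
    have hcase : ((T ∩ Ai).card = 0 ∧ (T ∩ Aj).card = 1 ∧ (T ∩ Ak).card = 1 ∧ (T ∩ Al).card = 1) ∨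
        ((T ∩ Ai).card = 1 ∧ (T ∩ Aj).card = 0 ∧ (T ∩ Ak).card = 1 ∧ (T ∩ Al).card = 1) ∨
        ((T ∩ Ai).card = 1 ∧ (T ∩ Aj).card = 1 ∧ (T ∩ Ak).card = 0 ∧ (T ∩ Al).card = 1) ∨
        ((T ∩ Ai).card = 1 ∧ (T ∩ Aj).card = 1 ∧ (T ∩ Ak).card = 1 ∧ (T ∩ Al).card = 0) := by
      omega
    rcases hcase with ⟨hci, hcj, hck, hcl⟩ | ⟨hci, hcj, hck, hcl⟩ |
      ⟨hci, hcj, hck, hcl⟩ | ⟨hci, hcj, hck, hcl⟩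
    · -- T misses Ai
      have hie : T ∩ Ai = ∅ := Finset.card_eq_zero.mp hci
      obtain ⟨x, hxe, hxT, hxJ⟩ := getone Aj hcj
      obtain ⟨y, hye, hyT, hyK⟩ := getone Ak hck
      obtain ⟨z, hze, hzT, hzL⟩ := getone Al hcl
      have cxy := hadjT x hxT y hyT (hdiffrow hjk hxJ hyK)
      have cxz := hadjT x hxT z hzT (hdiffrow hjl hxJ hzL)
      have cyz := hadjT y hyT z hzT (hdiffrow hkl hyK hzL)
      obtain ⟨d, hdAi, hd1, hd2, hd3⟩ := hsdiff (col x) (col y) (col z)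
      obtain ⟨σ, hK⟩ := buildK d (col x) (col y) (col z) hdAi (memcol x hxT)
        (memcol y hyT) (memcol z hzT) hd1 hd2 hd3 cxy cxz cyz
      refine ⟨Kf σ, Finset.mem_image_of_mem Kf (Finset.mem_univ σ), ?_⟩
      intro t ht
      rw [hK]
      simp only [Finset.mem_insert, Finset.mem_singleton]
      rcases rowOf (hTU ht) with h | h | h | h
      · exact absurd (hempty Ai t hie ht h) (fun hq => hq)
      · refine Or.inr (Or.inl ?_)
        rw [hsing Aj x t hxe ht h]
        exact (hpj_eq x hxJ).symm
      · refine Or.inr (Or.inr (Or.inl ?_))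
        rw [hsing Ak y t hye ht h]
        exact (hpk_eq y hyK).symm
      · refine Or.inr (Or.inr (Or.inr ?_))
        rw [hsing Al z t hze ht h]
        exact (hpl_eq z hzL).symm
    · -- T misses Aj
      have hje : T ∩ Aj = ∅ := Finset.card_eq_zero.mp hcj
      obtain ⟨a, hae, haT, haI⟩ := getone Ai hci
      obtain ⟨y, hye, hyT, hyK⟩ := getone Ak hck
      obtain ⟨z, hze, hzT, hzL⟩ := getone Al hcl
      have cay : a ≠ col y := by
        have := hadjT a haT y hyT (hdiffrow hik haI hyK)
        rwa [hcolAi a haI] at this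
      have caz : a ≠ col z := by
        have := hadjT a haT z hzT (hdiffrow hil haI hzL)
        rwa [hcolAi a haI] at this
      have cyz := hadjT y hyT z hzT (hdiffrow hkl hyK hzL)
      obtain ⟨d, hdAi, hd1, hd2, hd3⟩ := hsdiff a (col y) (col z)
      obtain ⟨σ, hK⟩ := buildK a d (col y) (col z) haI hdAi (memcol y hyT)
        (memcol z hzT) (Ne.symm hd1) cay caz hd2 hd3 cyz
      refine ⟨Kf σ, Finset.mem_image_of_mem Kf (Finset.mem_univ σ), ?_⟩
      intro t ht
      rw [hK]
      simp only [Finset.mem_insert, Finset.mem_singleton]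
      rcases rowOf (hTU ht) with h | h | h | h
      · exact Or.inl (hsing Ai a t hae ht h)
      · exact absurd (hempty Aj t hje ht h) (fun hq => hq)
      · refine Or.inr (Or.inr (Or.inl ?_))
        rw [hsing Ak y t hye ht h]
        exact (hpk_eq y hyK).symm
      · refine Or.inr (Or.inr (Or.inr ?_))
        rw [hsing Al z t hze ht h]
        exact (hpl_eq z hzL).symm
    · -- T misses Ak
      have hke : T ∩ Ak = ∅ := Finset.card_eq_zero.mp hck
      obtain ⟨a, hae, haT, haI⟩ := getone Ai hci
      obtain ⟨x, hxe, hxT, hxJ⟩ := getone Aj hcj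
      obtain ⟨z, hze, hzT, hzL⟩ := getone Al hcl
      have cax : a ≠ col x := by
        have := hadjT a haT x hxT (hdiffrow hij haI hxJ)
        rwa [hcolAi a haI] at this
      have caz : a ≠ col z := by
        have := hadjT a haT z hzT (hdiffrow hil haI hzL)
        rwa [hcolAi a haI] at this
      have cxz := hadjT x hxT z hzT (hdiffrow hjl hxJ hzL)
      obtain ⟨d, hdAi, hd1, hd2, hd3⟩ := hsdiff a (col x) (col z)
      obtain ⟨σ, hK⟩ := buildK a (col x) d (col z) haI (memcol x hxT) hdAi
        (memcol z hzT) cax (Ne.symm hd1) caz (Ne.symm hd2) cxz hd3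
      refine ⟨Kf σ, Finset.mem_image_of_mem Kf (Finset.mem_univ σ), ?_⟩
      intro t ht
      rw [hK]
      simp only [Finset.mem_insert, Finset.mem_singleton]
      rcases rowOf (hTU ht) with h | h | h | h
      · exact Or.inl (hsing Ai a t hae ht h)
      · refine Or.inr (Or.inl ?_)
        rw [hsing Aj x t hxe ht h]
        exact (hpj_eq x hxJ).symm
      · exact absurd (hempty Ak t hke ht h) (fun hq => hq)
      · refine Or.inr (Or.inr (Or.inr ?_))
        rw [hsing Al z t hze ht h]
        exact (hpl_eq z hzL).symm
    · -- T misses Al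
      have hle : T ∩ Al = ∅ := Finset.card_eq_zero.mp hcl
      obtain ⟨a, hae, haT, haI⟩ := getone Ai hci
      obtain ⟨x, hxe, hxT, hxJ⟩ := getone Aj hcj
      obtain ⟨y, hye, hyT, hyK⟩ := getone Ak hck
      have cax : a ≠ col x := by
        have := hadjT a haT x hxT (hdiffrow hij haI hxJ)
        rwa [hcolAi a haI] at this
      have cay : a ≠ col y := by
        have := hadjT a haT y hyT (hdiffrow hik haI hyK)
        rwa [hcolAi a haI] at this
      have cxy := hadjT x hxT y hyT (hdiffrow hjk hxJ hyK)
      obtain ⟨d, hdAi, hd1, hd2, hd3⟩ := hsdiff a (col x) (col y)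
      obtain ⟨σ, hK⟩ := buildK a (col x) (col y) d haI (memcol x hxT) (memcol y hyT)
        hdAi cax cay (Ne.symm hd1) cxy (Ne.symm hd2) (Ne.symm hd3)
      refine ⟨Kf σ, Finset.mem_image_of_mem Kf (Finset.mem_univ σ), ?_⟩
      intro t ht
      rw [hK]
      simp only [Finset.mem_insert, Finset.mem_singleton]
      rcases rowOf (hTU ht) with h | h | h | h
      · exact Or.inl (hsing Ai a t hae ht h)
      · refine Or.inr (Or.inl ?_)
        rw [hsing Aj x t hxe ht h]
        exact (hpj_eq x hxJ).symm
      · refine Or.inr (Or.inr (Or.inl ?_))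
        rw [hsing Ak y t hye ht h]
        exact (hpk_eq y hyK).symm
      · exact absurd (hempty Al t hle ht h) (fun hq => hq)
  refine ⟨?_, Finset.univ.image Kf, hCcard, ?_, hcover⟩
  · -- the isomorphism for Aj ∪ Ak ∪ Al
    have hsubU : ∀ x : (↑(Aj ∪ Ak ∪ Al) : Set V),
        (x : V) ∈ Ai ∪ Aj ∪ Ak ∪ Al ∧ ((x : V) ∈ Aj ∨ (x : V) ∈ Ak ∨ (x : V) ∈ Al) := by
      intro x
      have hx2 := x.2
      simp only [Finset.coe_union, Set.mem_union, Finset.mem_coe] at hx2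
      rcases hx2 with (h | h) | h
      exacts [⟨mU (Or.inr (Or.inl h)), Or.inl h⟩,
        ⟨mU (Or.inr (Or.inr (Or.inl h))), Or.inr (Or.inl h)⟩,
        ⟨mU (Or.inr (Or.inr (Or.inr h))), Or.inr (Or.inr h)⟩]
    set rIdx : V → ℕ := fun z => if z ∈ Aj then 0 else if z ∈ Ak then 1 else 2 with hrIdx
    have hrIdx_le : ∀ z, rIdx z ≤ 2 := by
      intro z
      simp only [hrIdx]
      split_ifs <;> omega
    set φ : (↑(Aj ∪ Ak ∪ Al) : Set V) → Fin 12 := fun x =>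
      ⟨(w (col (x : V))).val + 4 * rIdx (x : V), by
        have h1 := (w (col (x : V))).isLt
        have h2 := hrIdx_le (x : V)
        omega⟩ with hφ
    have hφval : ∀ x, (φ x : ℕ) = (w (col (x : V))).val + 4 * rIdx (x : V) := fun x => rfl
    have hφmod : ∀ x, (φ x : ℕ) % 4 = (w (col (x : V))).val := by
      intro x
      rw [hφval]
      have := (w (col (x : V))).isLt
      omega
    have hwcol : ∀ x : (↑(Aj ∪ Ak ∪ Al) : Set V), v (w (col (x : V))) = col (x : V) :=
      fun x => hvw _ (hcol _ (hsubU x).1).1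
    have hrow : ∀ z : V, (z ∈ Aj → rIdx z = 0) ∧ (z ∈ Ak → rIdx z = 1) ∧ (z ∈ Al → rIdx z = 2) := by
      intro z
      simp only [hrIdx]
      refine ⟨fun h => by rw [if_pos h], fun h => ?_, fun h => ?_⟩
      · rw [if_neg (fun hc => Finset.disjoint_left.mp hjk hc h), if_pos h]
      · rw [if_neg (fun hc => Finset.disjoint_left.mp hjl hc h),
          if_neg (fun hc => Finset.disjoint_left.mp hkl hc h)]
    have hcoleq : ∀ x y : (↑(Aj ∪ Ak ∪ Al) : Set V),
        (w (col (x : V))).val = (w (col (y : V))).val → col (x : V) = col (y : V) := by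
      intro x y h
      rw [← hwcol x, ← hwcol y]
      exact congrArg v (Fin.ext h)
    have hφinj : Function.Injective φ := by
      intro x y h
      have hval : (φ x : ℕ) = (φ y : ℕ) := by rw [h]
      rw [hφval, hφval] at hval
      have hwx := (w (col (x : V))).isLt
      have hwy := (w (col (y : V))).isLt
      have hrx := hrIdx_le (x : V)
      have hry := hrIdx_le (y : V)
      have hweq : (w (col (x : V))).val = (w (col (y : V))).val := by omega
      have hreq : rIdx (x : V) = rIdx (y : V) := by omega
      have hcoleq' : col (x : V) = col (y : V) := hcoleq x y hweq
      have hx' := (hsubU x).2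
      have hy' := (hsubU y).2
      apply Subtype.ext
      rcases hx' with hx' | hx' | hx' <;> rcases hy' with hy' | hy' | hy'
      · exact hcolinj Aj (Or.inr (Or.inl rfl)) _ hx' _ hy' hcoleq'
      · rw [(hrow _).1 hx', (hrow _).2.1 hy'] at hreq; omega
      · rw [(hrow _).1 hx', (hrow _).2.2 hy'] at hreq; omega
      · rw [(hrow _).2.1 hx', (hrow _).1 hy'] at hreq; omega
      · exact hcolinj Ak (Or.inr (Or.inr (Or.inl rfl))) _ hx' _ hy' hcoleq'
      · rw [(hrow _).2.1 hx', (hrow _).2.2 hy'] at hreq; omega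
      · rw [(hrow _).2.2 hx', (hrow _).1 hy'] at hreq; omega
      · rw [(hrow _).2.2 hx', (hrow _).2.1 hy'] at hreq; omega
      · exact hcolinj Al (Or.inr (Or.inr (Or.inr rfl))) _ hx' _ hy' hcoleq'
    have hcardX : Fintype.card (↑(Aj ∪ Ak ∪ Al) : Set V) = 12 := by
      have h1 : (Aj ∪ Ak ∪ Al).card = 12 := by
        rw [Finset.card_union_of_disjoint (Finset.disjoint_union_left.mpr ⟨hjl, hkl⟩),
          Finset.card_union_of_disjoint hjk, hj4, hk4, hl4]
      rw [← h1, ← Fintype.card_coe]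
      exact Fintype.card_congr (Equiv.subtypeEquivRight (fun x => by simp))
    have hφbij : Function.Bijective φ := by
      rw [Fintype.bijective_iff_injective_and_card]
      exact ⟨hφinj, by rw [hcardX]; simp⟩
    refine ⟨⟨Equiv.ofBijective φ hφbij, ?_⟩⟩
    intro a b
    have hL : (turanGraph 12 4).Adj (φ a) (φ b) ↔
        ((φ a : Fin 12) : ℕ) % 4 ≠ ((φ b : Fin 12) : ℕ) % 4 := by
      simp [turanGraph]
    show (turanGraph 12 4).Adj (φ a) (φ b) ↔ H.Adj (a : V) (b : V)
    rw [hL, hφmod a, hφmod b, hmaster (a : V) (hsubU a).1 (b : V) (hsubU b).1]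
    constructor
    · intro hne hc
      exact hne (by rw [hc])
    · intro hc hne
      exact hc (hcoleq a b (Fin.ext_iff.mp (Fin.ext hne)))
  · intro K hK
    obtain ⟨σ, -, rfl⟩ := Finset.mem_image.mp hK
    exact hK4 σ
end

section
/- Let m and q be positive integers with 3q ≤ m ≤ 4q, and let A' be the (m,q)-greedy sequence consisting of (m−3q) entries equal to 4 followed by (4q−m) entries equal to 3. Then f(A') = 28q³ − (45/2)q²m + 6qm² − (1/2)m³ + (3/2)qm − (1/2)m² − 3q + m. -/
open Finset SimpleGraph

/-- An `(m, p)`-greedy sequence: a nonincreasing sequence `a 1, …, a p` with entries in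
`{1, 2, 3, 4}` summing to `m` (values of `a` outside `[1, p]` are irrelevant). -/
def IsGreedySeq (m p : ℕ) (a : ℕ → ℕ) : Prop :=
  (∀ i ∈ Finset.Icc 1 p, 1 ≤ a i ∧ a i ≤ 4) ∧
  (∀ i j : ℕ, 1 ≤ i → i ≤ j → j ≤ p → a j ≤ a i) ∧
  ∑ i ∈ Finset.Icc 1 p, a i = m

/-- `a = #{i : a_i = 4}`. -/
def seqA (p : ℕ) (a : ℕ → ℕ) : ℕ := ((Finset.Icc 1 p).filter fun i => a i = 4).card

/-- `b = #{i : a_i ≥ 3}`. -/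
def seqB (p : ℕ) (a : ℕ → ℕ) : ℕ := ((Finset.Icc 1 p).filter fun i => 3 ≤ a i).card

/-- `c = #{i : a_i ≥ 2}`. -/
def seqC (p : ℕ) (a : ℕ → ℕ) : ℕ := ((Finset.Icc 1 p).filter fun i => 2 ≤ a i).card

/-- `S₁(A) = b`. -/
def S1 (p : ℕ) (a : ℕ → ℕ) : ℤ := (seqB p a : ℤ)

/-- `S₂(A) = mb + a² − ab − b² + bc − a − 3b`. -/
def S2 (m p : ℕ) (a : ℕ → ℕ) : ℤ :=
  (m : ℤ) * (seqB p a : ℤ) + (seqA p a : ℤ) ^ 2 - (seqA p a : ℤ) * (seqB p a : ℤ)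
    - (seqB p a : ℤ) ^ 2 + (seqB p a : ℤ) * (seqC p a : ℤ) - (seqA p a : ℤ) - 3 * (seqB p a : ℤ)

/-- `S₃(A)` as in the definition of the value of a greedy sequence. -/
def S3 (p : ℕ) (a : ℕ → ℕ) : ℤ :=
  (∑ k ∈ Finset.Icc 3 (seqB p a),
      (a k : ℤ) * ∑ j ∈ Finset.Icc 2 (k - 1), ((a j : ℤ) - 1) * ((j : ℤ) - 1)) +
  (∑ k ∈ Finset.Icc (seqB p a + 1) (seqC p a), (a k : ℤ) *
      ((∑ j ∈ Finset.Icc 2 (seqB p a), ((a j : ℤ) - 1) * ((j : ℤ) - 1)) +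
        ∑ j ∈ Finset.Icc (seqB p a + 1) (k - 1), ((a j : ℤ) - 1) * (seqB p a : ℤ))) +
  (∑ _k ∈ Finset.Icc (seqC p a + 1) p,
      ((∑ j ∈ Finset.Icc 2 (seqB p a), ((a j : ℤ) - 1) * ((j : ℤ) - 1)) +
        ∑ j ∈ Finset.Icc (seqB p a + 1) (seqC p a), ((a j : ℤ) - 1) * (seqB p a : ℤ)))

/-- The value `f(A) = S₁(A) + S₂(A) + S₃(A)` of a greedy sequence. -/
def fval (m p : ℕ) (a : ℕ → ℕ) : ℤ := S1 p a + S2 m p a + S3 p a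

lemma stmt17_inner1 (n : ℕ) :
    2 * ∑ j ∈ Finset.Icc 2 n, (3:ℤ) * ((j:ℤ) - 1) = 3 * n * (n - 1) := by
  induction n with
  | zero => simp
  | succ n ih =>
    rcases Nat.lt_or_ge n 1 with h | h
    · interval_cases n <;> simp
    · rw [Finset.sum_Icc_succ_top (by omega : 2 ≤ n + 1), mul_add]
      push_cast
      push_cast at ih
      linarith

lemma stmt17_inner2 (r n : ℕ) (h : r ≤ n) :
    2 * ∑ j ∈ Finset.Icc 2 n, ((if j ≤ r then (4:ℤ) else 3) - 1) * ((j:ℤ) - 1)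
      = 2 * n * (n - 1) + r * (r - 1) := by
  induction n, h using Nat.le_induction with
  | base =>
    have : ∀ j ∈ Finset.Icc 2 r, ((if j ≤ r then (4:ℤ) else 3) - 1) * ((j:ℤ) - 1)
        = 3 * ((j:ℤ) - 1) := by
      intro j hj; simp only [Finset.mem_Icc] at hj; rw [if_pos hj.2]; ring
    rw [Finset.sum_congr rfl this, stmt17_inner1]; ring
  | succ n hn ih =>
    rcases Nat.lt_or_ge n 1 with h | h
    · interval_cases n <;> interval_cases r <;> simp
    · rw [Finset.sum_Icc_succ_top (by omega : 2 ≤ n + 1), mul_add,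
        if_neg (by omega : ¬ n + 1 ≤ r)]
      push_cast
      push_cast at ih
      linarith

lemma stmt17_baseU (r : ℕ) :
    2 * ∑ k ∈ Finset.Icc 3 r, (4:ℤ) * ∑ j ∈ Finset.Icc 2 (k - 1), 3 * ((j:ℤ) - 1)
      = 4 * r * (r - 1) * (r - 2) := by
  induction r with
  | zero => simp
  | succ r ih =>
    rcases Nat.lt_or_ge r 2 with h | h
    · interval_cases r <;> simp
    · rw [Finset.sum_Icc_succ_top (by omega : 3 ≤ r + 1), mul_add,
        (by omega : r + 1 - 1 = r)]
      have h1 := stmt17_inner1 r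
      push_cast
      push_cast at ih h1
      linarith

lemma stmt17_key (r q : ℕ) (h : r ≤ q) :
    2 * ∑ k ∈ Finset.Icc 3 q, (if k ≤ r then (4:ℤ) else 3) *
        ∑ j ∈ Finset.Icc 2 (k - 1), ((if j ≤ r then (4:ℤ) else 3) - 1) * ((j:ℤ) - 1)
      = 2 * q * (q - 1) * (q - 2) + 2 * r * (r - 1) * (r - 2)
        + 3 * r * (r - 1) * (q - r) := by
  induction q, h using Nat.le_induction with
  | base =>
    have : ∀ k ∈ Finset.Icc 3 r, (if k ≤ r then (4:ℤ) else 3) *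
        ∑ j ∈ Finset.Icc 2 (k - 1), ((if j ≤ r then (4:ℤ) else 3) - 1) * ((j:ℤ) - 1)
        = (4:ℤ) * ∑ j ∈ Finset.Icc 2 (k - 1), 3 * ((j:ℤ) - 1) := by
      intro k hk; simp only [Finset.mem_Icc] at hk
      rw [if_pos hk.2]
      congr 1
      refine Finset.sum_congr rfl fun j hj => ?_
      simp only [Finset.mem_Icc] at hj
      rw [if_pos (by omega : j ≤ r)]; ring
    rw [Finset.sum_congr rfl this, stmt17_baseU]; ring
  | succ q hq ih =>
    rcases Nat.lt_or_ge q 2 with h | h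
    · interval_cases q <;> interval_cases r <;> simp
    · rw [Finset.sum_Icc_succ_top (by omega : 3 ≤ q + 1), mul_add,
        if_neg (by omega : ¬ q + 1 ≤ r), (by omega : q + 1 - 1 = q)]
      have h2 := stmt17_inner2 r q hq
      push_cast
      push_cast at ih h2
      linarith

lemma stmt17_seqB_eq (q r : ℕ) : seqB q (fun i => if i ≤ r then 4 else 3) = q := by
  unfold seqB
  rw [Finset.filter_true_of_mem (fun i _ => by dsimp; split_ifs <;> omega)]
  simp

lemma stmt17_seqC_eq (q r : ℕ) : seqC q (fun i => if i ≤ r then 4 else 3) = q := by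
  unfold seqC
  rw [Finset.filter_true_of_mem (fun i _ => by dsimp; split_ifs <;> omega)]
  simp

lemma stmt17_seqA_eq (q r : ℕ) (hr : r ≤ q) :
    seqA q (fun i => if i ≤ r then 4 else 3) = r := by
  unfold seqA
  have : ((Finset.Icc 1 q).filter fun i => (fun i => if i ≤ r then 4 else 3) i = 4)
      = Finset.Icc 1 r := by
    ext i
    simp only [Finset.mem_filter, Finset.mem_Icc]
    split_ifs <;> omega
  rw [this]; simp

lemma stmt17_two_fval (m q r : ℕ) (hr : r ≤ q) :
    2 * fval m q (fun i => if i ≤ r then 4 else 3)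
      = 2 * q + 2 * ((m:ℤ) * q + (r:ℤ)^2 - (r:ℤ) * q - r - 3 * q)
        + (2 * q * ((q:ℤ) - 1) * ((q:ℤ) - 2) + 2 * r * ((r:ℤ) - 1) * ((r:ℤ) - 2)
          + 3 * r * ((r:ℤ) - 1) * ((q:ℤ) - r)) := by
  unfold fval S1 S2 S3
  rw [stmt17_seqA_eq q r hr, stmt17_seqB_eq, stmt17_seqC_eq]
  rw [show Finset.Icc (q + 1) q = ∅ from Finset.Icc_eq_empty (by omega)]
  simp only [Finset.sum_empty, add_zero, Finset.sum_const, smul_zero, Finset.card_empty,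
    zero_smul]
  have hk := stmt17_key r q hr
  simp only [Nat.cast_ite, Nat.cast_ofNat]
  push_cast at hk ⊢
  linarith

theorem stmt17 (m q : ℕ) (hm : 1 ≤ m) (hq : 1 ≤ q) (h1 : 3 * q ≤ m) (h2 : m ≤ 4 * q) :
    (fval m q (fun i => if i ≤ m - 3 * q then 4 else 3) : ℚ) =
      28 * (q : ℚ) ^ 3 - 45 / 2 * (q : ℚ) ^ 2 * (m : ℚ) + 6 * (q : ℚ) * (m : ℚ) ^ 2
        - 1 / 2 * (m : ℚ) ^ 3 + 3 / 2 * (q : ℚ) * (m : ℚ) - 1 / 2 * (m : ℚ) ^ 2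
        - 3 * (q : ℚ) + (m : ℚ) := by
  obtain ⟨r, rfl⟩ : ∃ r, m = 3 * q + r := ⟨m - 3 * q, by omega⟩
  simp only [Nat.add_sub_cancel_left]
  have hr : r ≤ q := by omega
  have h2f := stmt17_two_fval (3 * q + r) q r hr
  have h2fq : (2:ℚ) * (fval (3 * q + r) q (fun i => if i ≤ r then 4 else 3) : ℚ)
      = 2 * q + 2 * ((3 * (q:ℚ) + r) * q + (r:ℚ)^2 - (r:ℚ) * q - r - 3 * q)
        + (2 * q * ((q:ℚ) - 1) * ((q:ℚ) - 2) + 2 * r * ((r:ℚ) - 1) * ((r:ℚ) - 2)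
          + 3 * r * ((r:ℚ) - 1) * ((q:ℚ) - r)) := by
    exact_mod_cast congrArg (fun z : ℤ => (z : ℚ)) h2f
  push_cast
  push_cast at h2fq
  linarith
end

section
/- Let m and q be positive integers with 3q − 1 ≤ m ≤ 4q − 2, and let A' be the (m,q)-greedy sequence consisting of (m−3q+1) entries equal to 4, followed by (4q−m−2) entries equal to 3, followed by one entry equal to 2. Then f(A') = 28q³ − (45/2)q²m + 6qm² − (1/2)m³ − 28q² + (33/2)qm − (5/2)m² + 6q − 2m. -/
open Finset SimpleGraph

def gq (t j : ℕ) : ℚ := (if j ≤ t then 3 else 2) * ((j : ℚ) - 1)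

def aseq (t r : ℕ) : ℕ → ℕ := fun i => if i ≤ t then 4 else if i ≤ r then 3 else 2

lemma sum_g_le (t n : ℕ) (h : n ≤ t) :
    ∑ j ∈ Icc 2 n, gq t j = 3 * (n : ℚ) * ((n : ℚ) - 1) / 2 := by
  induction n with
  | zero => simp
  | succ n ih =>
    rcases Nat.lt_or_ge n 1 with h0 | h0
    · interval_cases n
      · simp [show Icc 2 1 = (∅ : Finset ℕ) from rfl]
    · rw [Finset.sum_Icc_succ_top (by omega), ih (by omega)]
      rw [gq, if_pos (show n + 1 ≤ t from h)]
      push_cast; ring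

lemma sum_g_ge (t n : ℕ) (h : t ≤ n) :
    ∑ j ∈ Icc 2 n, gq t j = (n : ℚ) * ((n : ℚ) - 1) + (t : ℚ) * ((t : ℚ) - 1) / 2 := by
  induction n with
  | zero =>
    have : t = 0 := by omega
    subst this; simp
  | succ n ih =>
    rcases Nat.lt_or_ge n t with hnt | hnt
    · have : t = n + 1 := by omega
      subst this
      rw [sum_g_le _ _ le_rfl]; push_cast; ring
    · rcases Nat.lt_or_ge n 1 with h0 | h0
      · interval_cases n
        · have : t = 0 := by omega
          subst this
          rw [show Icc 2 1 = (∅ : Finset ℕ) from rfl]; simp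
      · rw [Finset.sum_Icc_succ_top (by omega), ih hnt]
        rw [gq, if_neg (by omega)]
        push_cast; ring

lemma sum_F_le (t n : ℕ) (h : n ≤ t) :
    ∑ k ∈ Icc 3 n, (if k ≤ t then (4 : ℚ) else 3) * ∑ j ∈ Icc 2 (k - 1), gq t j
      = 2 * (n : ℚ) * ((n : ℚ) - 1) * ((n : ℚ) - 2) := by
  induction n with
  | zero => simp
  | succ n ih =>
    rcases Nat.lt_or_ge n 2 with h0 | h0
    · interval_cases n
      · rw [show Icc 3 1 = (∅ : Finset ℕ) from rfl]; simp
      · rw [show Icc 3 2 = (∅ : Finset ℕ) from rfl]; simp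
    · rw [Finset.sum_Icc_succ_top (by omega), ih (by omega)]
      rw [if_pos (show n + 1 ≤ t from h), Nat.add_sub_cancel,
        sum_g_le t n (by omega)]
      push_cast; ring

lemma sum_F_ge (t n : ℕ) (h : t ≤ n) :
    ∑ k ∈ Icc 3 n, (if k ≤ t then (4 : ℚ) else 3) * ∑ j ∈ Icc 2 (k - 1), gq t j
      = (t : ℚ) * ((t : ℚ) - 1) * ((t : ℚ) - 2) + (n : ℚ) * ((n : ℚ) - 1) * ((n : ℚ) - 2)
        + 3 / 2 * (t : ℚ) * ((t : ℚ) - 1) * ((n : ℚ) - (t : ℚ)) := by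
  induction n with
  | zero =>
    have : t = 0 := by omega
    subst this; simp
  | succ n ih =>
    rcases Nat.lt_or_ge n t with hnt | hnt
    · have : t = n + 1 := by omega
      subst this
      rw [sum_F_le _ _ le_rfl]; push_cast; ring
    · rcases Nat.lt_or_ge n 2 with h0 | h0
      · interval_cases n
        · have : t = 0 := by omega
          subst this
          rw [show Icc 3 1 = (∅ : Finset ℕ) from rfl]; simp
        · interval_cases t
          · rw [show Icc 3 2 = (∅ : Finset ℕ) from rfl]; simp
          · rw [show Icc 3 2 = (∅ : Finset ℕ) from rfl]; simp
      · rw [Finset.sum_Icc_succ_top (by omega), ih hnt]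
        rw [if_neg (by omega), Nat.add_sub_cancel, sum_g_ge t n hnt]
        push_cast; ring

lemma aseq_eq (t r k : ℕ) (hk : k ≤ r) : aseq t r k = if k ≤ t then 4 else 3 := by
  rw [aseq]; split_ifs <;> omega

lemma hA (t r : ℕ) (ht : t ≤ r) : seqA (r + 1) (aseq t r) = t := by
  rw [seqA, show ((Icc 1 (r+1)).filter fun i => aseq t r i = 4) = Icc 1 t by
    ext i; rw [mem_filter, mem_Icc, mem_Icc]; simp only [aseq]; split_ifs <;> omega]
  simp

lemma hB (t r : ℕ) (ht : t ≤ r) : seqB (r + 1) (aseq t r) = r := by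
  rw [seqB, show ((Icc 1 (r+1)).filter fun i => 3 ≤ aseq t r i) = Icc 1 r by
    ext i; rw [mem_filter, mem_Icc, mem_Icc]; simp only [aseq]; split_ifs <;> omega]
  simp

lemma hC (t r : ℕ) (_ht : t ≤ r) : seqC (r + 1) (aseq t r) = r + 1 := by
  rw [seqC, show ((Icc 1 (r+1)).filter fun i => 2 ≤ aseq t r i) = Icc 1 (r+1) by
    ext i; rw [mem_filter, mem_Icc]; simp only [aseq]; split_ifs <;> omega]
  simp

theorem stmt18 (m q : ℕ) (hm : 1 ≤ m) (hq : 1 ≤ q) (h1 : 3 * q - 1 ≤ m) (h2 : m ≤ 4 * q - 2) :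
    (fval m q (fun i => if i ≤ m + 1 - 3 * q then 4 else if i ≤ q - 1 then 3 else 2) : ℚ) =
      28 * (q : ℚ) ^ 3 - 45 / 2 * (q : ℚ) ^ 2 * (m : ℚ) + 6 * (q : ℚ) * (m : ℚ) ^ 2
        - 1 / 2 * (m : ℚ) ^ 3 - 28 * (q : ℚ) ^ 2 + 33 / 2 * (q : ℚ) * (m : ℚ)
        - 5 / 2 * (m : ℚ) ^ 2 + 6 * (q : ℚ) - 2 * (m : ℚ) := by
  obtain ⟨r, rfl⟩ : ∃ r, q = r + 1 := ⟨q - 1, by omega⟩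
  obtain ⟨t, ht, rfl⟩ : ∃ t, t ≤ r ∧ m = 3 * r + 2 + t :=
    ⟨m + 1 - 3 * (r + 1), by omega, by omega⟩
  have hf : (fun i => if i ≤ 3 * r + 2 + t + 1 - 3 * (r + 1) then 4
      else if i ≤ r + 1 - 1 then 3 else 2) = aseq t r := by
    funext i
    simp only [show 3 * r + 2 + t + 1 - 3 * (r + 1) = t from by omega, Nat.add_sub_cancel, aseq]
  rw [hf, fval, S1, S2, S3, hA t r ht, hB t r ht, hC t r ht]
  rw [show Icc (r + 1 + 1) (r + 1) = (∅ : Finset ℕ) from Icc_eq_empty (by omega),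
    Finset.sum_empty]
  rw [show Icc (r + 1) (r + 1) = ({r + 1} : Finset ℕ) from Icc_self _, Finset.sum_singleton]
  rw [Nat.add_sub_cancel, show Icc (r + 1) r = (∅ : Finset ℕ) from Icc_eq_empty (by omega),
    Finset.sum_empty]
  rw [show aseq t r (r + 1) = 2 from by rw [aseq]; split_ifs <;> omega]
  push_cast
  have e1 : ∀ k ∈ Icc 3 r, ((aseq t r k : ℚ)) *
      (∑ j ∈ Icc 2 (k - 1), ((aseq t r j : ℚ) - 1) * ((j : ℚ) - 1))
      = (if k ≤ t then (4 : ℚ) else 3) * ∑ j ∈ Icc 2 (k - 1), gq t j := by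
    intro k hk
    rw [mem_Icc] at hk
    congr 1
    · rw [aseq_eq t r k (by omega)]
      split_ifs <;> norm_num
    · refine Finset.sum_congr rfl fun j hj => ?_
      rw [mem_Icc] at hj
      rw [aseq_eq t r j (by omega), gq]
      split_ifs <;> norm_num
  have e2 : ∑ j ∈ Icc 2 r, ((aseq t r j : ℚ) - 1) * ((j : ℚ) - 1) = ∑ j ∈ Icc 2 r, gq t j := by
    refine Finset.sum_congr rfl fun j hj => ?_
    rw [mem_Icc] at hj
    rw [aseq_eq t r j (by omega), gq]
    split_ifs <;> norm_num
  rw [Finset.sum_congr rfl e1, sum_F_ge t r ht, e2, sum_g_ge t r ht]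
  ring
end

section
/- Let m and q be positive integers with 3q − 2 ≤ m ≤ 4q − 3, and let A' be the (m,q)-greedy sequence consisting of (m−3q+2) entries equal to 4, followed by (4q−m−3) entries equal to 3, followed by one entry equal to 1. Then f(A') = 28q³ − (45/2)q²m + 6qm² − (1/2)m³ − 56q² + (63/2)qm − (9/2)m² + 34q − 10m − 6. -/
open Finset SimpleGraph

lemma aux_E2 (N : ℕ) : ∑ k ∈ Finset.Icc 3 N, (((k:ℚ)-1)*((k:ℚ)-2))
    = (N:ℚ)*((N:ℚ)-1)*((N:ℚ)-2)/3 := by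
  induction N with
  | zero => simp
  | succ N ih =>
    rcases Nat.lt_or_ge N 2 with h | h
    · interval_cases N <;>
        · rw [Finset.Icc_eq_empty (by omega), Finset.sum_empty]; norm_num
    · rw [Finset.sum_Icc_succ_top (by omega : 3 ≤ N + 1), ih]
      push_cast; ring

lemma aux_bigsum (t n : ℕ) (h : t ≤ n) :
    ∑ k ∈ Finset.Icc 3 n, (((if k ≤ t then 4 else 3 : ℕ)):ℚ) *
      (((k:ℚ)-1)*((k:ℚ)-2) + ((min (k-1) t : ℕ):ℚ)*(((min (k-1) t : ℕ):ℚ)-1)/2)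
    = (n:ℚ)*((n:ℚ)-1)*((n:ℚ)-2) + (t:ℚ)*((t:ℚ)-1)*((t:ℚ)-2)
      + 3/2*(t:ℚ)*((t:ℚ)-1)*((n:ℚ)-(t:ℚ)) := by
  induction n, h using Nat.le_induction with
  | base =>
    have hc : ∀ k ∈ Finset.Icc 3 t, (((if k ≤ t then 4 else 3 : ℕ)):ℚ) *
        (((k:ℚ)-1)*((k:ℚ)-2) + ((min (k-1) t : ℕ):ℚ)*(((min (k-1) t : ℕ):ℚ)-1)/2)
        = 6 * (((k:ℚ)-1)*((k:ℚ)-2)) := by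
      intro k hk
      simp only [Finset.mem_Icc] at hk
      rw [if_pos hk.2, Nat.min_eq_left (by omega), Nat.cast_sub (by omega : 1 ≤ k)]
      push_cast; ring
    rw [Finset.sum_congr rfl hc, ← Finset.mul_sum, aux_E2]
    ring
  | succ n hn ih =>
    rcases Nat.lt_or_ge n 2 with h2 | h2
    · interval_cases n <;> interval_cases t <;>
        · rw [Finset.Icc_eq_empty (by omega), Finset.sum_empty]; norm_num
    · rw [Finset.sum_Icc_succ_top (by omega : 3 ≤ n + 1), ih,
        if_neg (by omega : ¬ n + 1 ≤ t),
        show n + 1 - 1 = n by omega, Nat.min_eq_right hn]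
      push_cast; ring

lemma key (s t : ℕ) (hts : t ≤ s) (a : ℕ → ℕ)
    (ha : ∀ i, a i = if i ≤ t then 4 else if i ≤ s then 3 else 1) :
    (fval (3*s+1+t) (s+1) a : ℚ) =
      28 * ((s:ℚ)+1) ^ 3 - 45 / 2 * ((s:ℚ)+1) ^ 2 * (3*(s:ℚ)+1+(t:ℚ))
        + 6 * ((s:ℚ)+1) * (3*(s:ℚ)+1+(t:ℚ)) ^ 2
        - 1 / 2 * (3*(s:ℚ)+1+(t:ℚ)) ^ 3 - 56 * ((s:ℚ)+1) ^ 2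
        + 63 / 2 * ((s:ℚ)+1) * (3*(s:ℚ)+1+(t:ℚ))
        - 9 / 2 * (3*(s:ℚ)+1+(t:ℚ)) ^ 2 + 34 * ((s:ℚ)+1) - 10 * (3*(s:ℚ)+1+(t:ℚ)) - 6 := by
  have hA : seqA (s+1) a = t := by
    have h : (Finset.Icc 1 (s+1)).filter (fun i => a i = 4) = Finset.Icc 1 t := by
      ext i
      simp only [Finset.mem_filter, Finset.mem_Icc, ha]
      split_ifs <;> omega
    rw [seqA, h, Nat.card_Icc]; omega
  have hB : seqB (s+1) a = s := by
    have h : (Finset.Icc 1 (s+1)).filter (fun i => 3 ≤ a i) = Finset.Icc 1 s := by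
      ext i
      simp only [Finset.mem_filter, Finset.mem_Icc, ha]
      split_ifs <;> omega
    rw [seqB, h, Nat.card_Icc]; omega
  have hC : seqC (s+1) a = s := by
    have h : (Finset.Icc 1 (s+1)).filter (fun i => 2 ≤ a i) = Finset.Icc 1 s := by
      ext i
      simp only [Finset.mem_filter, Finset.mem_Icc, ha]
      split_ifs <;> omega
    rw [seqC, h, Nat.card_Icc]; omega
  have Tval : ∀ K, K ≤ s → (∑ j ∈ Finset.Icc 2 K, (((a j:ℚ))-1)*((j:ℚ)-1))
      = (K:ℚ)*((K:ℚ)-1) + ((min K t : ℕ):ℚ)*(((min K t : ℕ):ℚ)-1)/2 := by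
    intro K
    induction K with
    | zero => intro _; simp
    | succ K ih =>
      intro hK
      rcases Nat.lt_or_ge K 1 with h1 | h1
      · interval_cases K
        rw [Finset.Icc_eq_empty (by omega), Finset.sum_empty]
        rcases Nat.eq_zero_or_pos t with h | h
        · subst h; norm_num
        · rw [show min (0+1) t = 1 by omega]; norm_num
      · rw [Finset.sum_Icc_succ_top (by omega : 2 ≤ K + 1), ih (by omega), ha (K+1)]
        by_cases h4 : K + 1 ≤ t
        · rw [if_pos h4, Nat.min_eq_left h4, Nat.min_eq_left (by omega : K ≤ t)]
          push_cast; ring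
        · rw [if_neg h4, if_pos hK, Nat.min_eq_right (by omega : t ≤ K + 1),
            Nat.min_eq_right (by omega : t ≤ K)]
          push_cast; ring
  have hmain : (∑ k ∈ Finset.Icc 3 s, ((a k:ℚ)) * ∑ j ∈ Finset.Icc 2 (k-1),
        (((a j:ℚ))-1)*((j:ℚ)-1))
      = (s:ℚ)*((s:ℚ)-1)*((s:ℚ)-2) + (t:ℚ)*((t:ℚ)-1)*((t:ℚ)-2)
        + 3/2*(t:ℚ)*((t:ℚ)-1)*((s:ℚ)-(t:ℚ)) := by
    rw [← aux_bigsum t s hts]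
    refine Finset.sum_congr rfl ?_
    intro k hk
    simp only [Finset.mem_Icc] at hk
    rw [Tval (k-1) (by omega), ha k,
      show (if k ≤ t then 4 else if k ≤ s then 3 else 1) = (if k ≤ t then 4 else 3 : ℕ) by
        split_ifs <;> omega,
      Nat.cast_sub (by omega : 1 ≤ k)]
    ring
  have hTs := Tval s (le_refl s)
  rw [Nat.min_eq_right hts] at hTs
  simp only [fval, S1, S2, S3, hA, hB, hC]
  rw [Finset.Icc_eq_empty (by omega : ¬ s + 1 ≤ s)]
  simp only [Finset.sum_empty, Finset.Icc_self, Finset.sum_singleton, add_zero]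
  push_cast
  rw [hmain, hTs]
  ring

theorem stmt19 (m q : ℕ) (hm : 1 ≤ m) (hq : 1 ≤ q) (h1 : 3 * q - 2 ≤ m) (h2 : m ≤ 4 * q - 3) :
    (fval m q (fun i => if i ≤ m + 2 - 3 * q then 4 else if i ≤ q - 1 then 3 else 1) : ℚ) =
      28 * (q : ℚ) ^ 3 - 45 / 2 * (q : ℚ) ^ 2 * (m : ℚ) + 6 * (q : ℚ) * (m : ℚ) ^ 2
        - 1 / 2 * (m : ℚ) ^ 3 - 56 * (q : ℚ) ^ 2 + 63 / 2 * (q : ℚ) * (m : ℚ)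
        - 9 / 2 * (m : ℚ) ^ 2 + 34 * (q : ℚ) - 10 * (m : ℚ) - 6 := by
  obtain ⟨s, t, hts, hm', hq'⟩ : ∃ s t, t ≤ s ∧ m = 3*s+1+t ∧ q = s+1 :=
    ⟨q - 1, m + 2 - 3*q, by omega, by omega, by omega⟩
  subst hm' hq'
  rw [show (fun i => if i ≤ 3*s+1+t + 2 - 3*(s+1) then 4 else if i ≤ s+1-1 then 3 else 1)
      = (fun i => if i ≤ t then 4 else if i ≤ s then 3 else 1) by
    funext i
    rw [show 3*s+1+t + 2 - 3*(s+1) = t by omega, show s+1-1 = s from rfl]]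
  rw [key s t hts _ (fun i => rfl)]
  push_cast
  ring
end
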